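/- arXiv:1509.05356 — 2 statements merged into one kernel-verified Lean document; each statement's English description precedes it below -/
import Mathlib

section
/- Let ε > 0 be a constant and let q be a positive integer. Then there exists a constant λ > 0 such that for G ~ G(n,p) with p = (q+1+ε)·log n / n and m = ⌈λ·n·log log n / log n⌉, the random variable T_n = Σ (q/(q+1))^{e_G(X,Y)}, where the sum ranges over all pairs of disjoint sets X, Y ⊆ V(G) with |X| = |Y| = m, converges to 0 in probability as n → ∞; that is, for every η > 0, asymptotically almost surely T_n ≤ η. -/
open MeasureTheory Filter

noncomputable def bernoulliMeasure (p : ℝ) : Measure Bool :=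
  (PMF.bernoulli (min (Real.toNNReal p) 1) (min_le_right _ _)).toMeasure

noncomputable def gnp (n : ℕ) (p : ℝ) : Measure (Sym2 (Fin n) → Bool) :=
  Measure.pi fun _ => bernoulliMeasure p

def graphOf {n : ℕ} (ω : Sym2 (Fin n) → Bool) : SimpleGraph (Fin n) where
  Adj u v := u ≠ v ∧ ω s(u, v) = true
  symm := by
    constructor
    intro u v h
    exact ⟨h.1.symm, by rw [Sym2.eq_swap]; exact h.2⟩
  loopless := by
    constructor
    intro u h
    exact h.1 rfl

instance {n : ℕ} (ω : Sym2 (Fin n) → Bool) : DecidableRel (graphOf ω).Adj :=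
  fun u v => inferInstanceAs (Decidable (u ≠ v ∧ ω s(u, v) = true))

/-- `e_G(A)`: the number of edges with both endpoints in `A`. -/
def edgesWithin {n : ℕ} (ω : Sym2 (Fin n) → Bool) (A : Finset (Fin n)) : ℕ :=
  ((graphOf ω).edgeFinset ∩ A.sym2).card

/-- `e_G(X,Y)`: the number of edges with one endpoint in `X` and one in `Y`. -/
def edgesBetween {n : ℕ} (ω : Sym2 (Fin n) → Bool) (X Y : Finset (Fin n)) : ℕ :=
  ((graphOf ω).edgeFinset.filter fun e => ∃ x ∈ X, ∃ y ∈ Y, e = s(x, y)).card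

/-- `X_i`: the number of vertices of degree exactly `i`. -/
def degCount {n : ℕ} (ω : Sym2 (Fin n) → Bool) (i : ℕ) : ℕ :=
  (Finset.univ.filter fun v => (graphOf ω).degree v = i).card

/-- `μ_i = E[X_i]`. -/
noncomputable def muDeg (n : ℕ) (p : ℝ) (i : ℕ) : ℝ :=
  ∫ ω, (degCount ω i : ℝ) ∂(gnp n p)

/-- Outer neighbourhood of a vertex set. -/
def outerNbhd {V : Type*} (G : SimpleGraph V) (U : Set V) : Set V :=
  {v | v ∉ U ∧ ∃ u ∈ U, G.Adj u v}

/-- `G` is a `(t,k)`-expander. -/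
def IsExpander {V : Type*} (G : SimpleGraph V) (t k : ℝ) : Prop :=
  ∀ U : Set V, (U.ncard : ℝ) ≤ t → k * U.ncard ≤ ((outerNbhd G U).ncard : ℝ)

/-- Length of a longest path in `G`. -/
noncomputable def longestPathLength {V : Type*} (G : SimpleGraph V) : ℕ :=
  sSup {l : ℕ | ∃ (u v : V) (p : G.Walk u v), p.IsPath ∧ p.length = l}

/-- `e` is a booster for `G`. -/
def IsBooster {V : Type*} [Fintype V] [DecidableEq V] (G : SimpleGraph V) (e : Sym2 V) : Prop :=
  ¬ e.IsDiag ∧ e ∉ G.edgeSet ∧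
    ((G ⊔ SimpleGraph.fromEdgeSet {e}).IsHamiltonian ∨
      longestPathLength G < longestPathLength (G ⊔ SimpleGraph.fromEdgeSet {e}))

/-- The set of boosters of `G`. -/
def boosters {V : Type*} [Fintype V] [DecidableEq V] (G : SimpleGraph V) : Set (Sym2 V) :=
  {e | IsBooster G e}


/-! ### Auxiliary lemmas -/

instance bernoulliMeasure_isProb (p : ℝ) : MeasureTheory.IsProbabilityMeasure (bernoulliMeasure p) :=
  PMF.toMeasure.isProbabilityMeasure _

instance gnp_isProb (n : ℕ) (p : ℝ) : MeasureTheory.IsProbabilityMeasure (gnp n p) :=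
  MeasureTheory.Measure.pi.instIsProbabilityMeasure _

lemma bern_integral (p : ℝ) (hp0 : 0 ≤ p) (hp1 : p ≤ 1) (g : Bool → ℝ) :
    ∫ b, g b ∂(bernoulliMeasure p) = p * g true + (1 - p) * g false := by
  rw [integral_fintype Integrable.of_finite]
  have hple : ENNReal.ofReal p ≤ 1 := by
    rw [← ENNReal.ofReal_one]; exact ENNReal.ofReal_le_ofReal hp1
  have hmin : min (Real.toNNReal p) 1 = Real.toNNReal p := min_eq_left (Real.toNNReal_le_one.mpr hp1)
  have ht : (bernoulliMeasure p) {true} = ENNReal.ofReal p := by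
    rw [bernoulliMeasure, PMF.toMeasure_apply_singleton _ _ (measurableSet_singleton _)]
    simp [hmin, ENNReal.ofReal, PMF.bernoulli_apply]
  have hf : (bernoulliMeasure p) {false} = 1 - ENNReal.ofReal p := by
    rw [bernoulliMeasure, PMF.toMeasure_apply_singleton _ _ (measurableSet_singleton _)]
    simp [hmin, ENNReal.ofReal, ENNReal.coe_sub, PMF.bernoulli_apply]
  rw [Fintype.sum_bool]
  simp only [Measure.real]
  rw [ht, hf,
    ENNReal.toReal_sub_of_le hple (by simp), ENNReal.toReal_one, ENNReal.toReal_ofReal hp0]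
  simp [smul_eq_mul]

lemma gnp_integral_prod (n : ℕ) (p : ℝ) (f : Sym2 (Fin n) → Bool → ℝ) :
    ∫ ω, ∏ e, f e (ω e) ∂(gnp n p) = ∏ e, ∫ b, f e b ∂(bernoulliMeasure p) := by
  letI : MeasureSpace Bool := ⟨bernoulliMeasure p⟩
  haveI : IsProbabilityMeasure (volume : Measure Bool) :=
    inferInstanceAs (IsProbabilityMeasure (bernoulliMeasure p))
  haveI : SigmaFinite (volume : Measure Bool) := by infer_instance
  exact MeasureTheory.integral_fintype_prod_eq_prod (𝕜 := ℝ) f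

lemma edgesBetween_eq {n : ℕ} (ω : Sym2 (Fin n) → Bool) (X Y : Finset (Fin n))
    (hXY : Disjoint X Y) :
    edgesBetween ω X Y
      = (((X ×ˢ Y).image fun a => s(a.1, a.2)).filter fun e => ω e = true).card := by
  unfold edgesBetween
  congr 1
  ext e
  simp only [Finset.mem_filter, SimpleGraph.mem_edgeFinset, Finset.mem_image,
    Finset.mem_product, SimpleGraph.mem_edgeSet]
  constructor
  · rintro ⟨he, x, hx, y, hy, rfl⟩
    exact ⟨⟨⟨x, y⟩, ⟨hx, hy⟩, rfl⟩, he.2⟩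
  · rintro ⟨⟨⟨x, y⟩, ⟨hx, hy⟩, rfl⟩, hω⟩
    have hxy : x ≠ y := by
      rintro rfl
      exact (Finset.disjoint_left.mp hXY hx) hy
    exact ⟨⟨hxy, hω⟩, x, hx, y, hy, rfl⟩

lemma card_image_pairs {n : ℕ} (X Y : Finset (Fin n)) (hXY : Disjoint X Y) :
    ((X ×ˢ Y).image fun a => s(a.1, a.2)).card = X.card * Y.card := by
  rw [Finset.card_image_of_injOn, Finset.card_product]
  rintro ⟨x₁, y₁⟩ h₁ ⟨x₂, y₂⟩ h₂ h
  simp only [Finset.mem_coe, Finset.mem_product] at h₁ h₂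
  simp only [Sym2.eq, Sym2.rel_iff', Prod.mk.injEq, Prod.swap_prod_mk] at h
  rcases h with ⟨rfl, rfl⟩ | ⟨rfl, rfl⟩
  · rfl
  · exact absurd h₂.1 (fun hx => (Finset.disjoint_left.mp hXY hx) h₁.2)

lemma pair_exp {n : ℕ} (p θ : ℝ) (hp0 : 0 ≤ p) (hp1 : p ≤ 1)
    (X Y : Finset (Fin n)) (hXY : Disjoint X Y) :
    ∫ ω, θ ^ edgesBetween ω X Y ∂(gnp n p)
      = (1 - p * (1 - θ)) ^ (X.card * Y.card) := by
  classical
  set S : Finset (Sym2 (Fin n)) := (X ×ˢ Y).image fun a => s(a.1, a.2) with hS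
  have h1 : ∀ ω : Sym2 (Fin n) → Bool,
      θ ^ edgesBetween ω X Y = ∏ e, (if e ∈ S ∧ ω e = true then θ else 1) := by
    intro ω
    rw [edgesBetween_eq ω X Y hXY]
    rw [Finset.prod_ite, Finset.prod_const, Finset.prod_const_one, mul_one]
    have h : Finset.univ.filter (fun e => e ∈ S ∧ ω e = true)
        = S.filter fun e => ω e = true := by ext e; simp
    rw [h]
  calc ∫ ω, θ ^ edgesBetween ω X Y ∂(gnp n p)
      = ∫ ω, ∏ e, (if e ∈ S ∧ ω e = true then θ else 1) ∂(gnp n p) :=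
        integral_congr_ae (Filter.Eventually.of_forall h1)
    _ = ∏ e, ∫ b, (if e ∈ S ∧ b = true then θ else 1) ∂(bernoulliMeasure p) :=
        gnp_integral_prod n p (fun e b => if e ∈ S ∧ b = true then θ else 1)
    _ = ∏ e, (if e ∈ S then (1 - p * (1 - θ)) else 1) := by
        refine Finset.prod_congr rfl fun e _ => ?_
        rw [bern_integral p hp0 hp1]
        by_cases he : e ∈ S <;> simp [he] <;> ring
    _ = (1 - p * (1 - θ)) ^ S.card := by
        rw [Finset.prod_ite_mem, Finset.univ_inter, Finset.prod_const]
    _ = _ := by rw [hS, card_image_pairs X Y hXY]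

lemma tendsto_good (θ : ℝ) (hθ0 : 0 ≤ θ) (hθ1 : θ ≤ 1) (p : ℕ → ℝ) (m : ℕ → ℕ)
    (hp01 : ∀ᶠ n in atTop, 0 ≤ p n ∧ p n ≤ 1)
    (hE : Tendsto (fun n : ℕ =>
        ((n.choose (m n) : ℝ)) ^ 2 * (1 - p n * (1 - θ)) ^ (m n * m n)) atTop (nhds 0))
    (η : ℝ) (hη : 0 < η) :
    Tendsto
      (fun n : ℕ => gnp n (p n)
        {ω | ∑ P ∈ (Finset.univ : Finset (Finset (Fin n) × Finset (Fin n))).filter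
              (fun P => Disjoint P.1 P.2 ∧ P.1.card = m n ∧ P.2.card = m n),
            θ ^ (edgesBetween ω P.1 P.2) ≤ η})
      atTop (nhds 1) := by
  classical
  set E : ℕ → ℝ := fun n =>
    ((n.choose (m n) : ℝ)) ^ 2 * (1 - p n * (1 - θ)) ^ (m n * m n) with hEdef
  have key : ∀ᶠ n in atTop,
      1 - ENNReal.ofReal (E n / η)
        ≤ gnp n (p n)
          {ω | ∑ P ∈ (Finset.univ : Finset (Finset (Fin n) × Finset (Fin n))).filter
                (fun P => Disjoint P.1 P.2 ∧ P.1.card = m n ∧ P.2.card = m n),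
              θ ^ (edgesBetween ω P.1 P.2) ≤ η} := by
    filter_upwards [hp01] with n hn
    obtain ⟨hp0, hp1⟩ := hn
    set M := m n
    set r : ℝ := 1 - p n * (1 - θ) with hrdef
    have hr0 : 0 ≤ r := by
      have := mul_le_one₀ (a := p n) (b := 1 - θ) hp1 (by linarith) (by linarith)
      simp only [hrdef]; linarith
    set A : Finset (Finset (Fin n) × Finset (Fin n)) :=
      (Finset.univ : Finset (Finset (Fin n) × Finset (Fin n))).filter
        (fun P => Disjoint P.1 P.2 ∧ P.1.card = M ∧ P.2.card = M) with hAdef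
    set T : (Sym2 (Fin n) → Bool) → ℝ := fun ω => ∑ P ∈ A, θ ^ edgesBetween ω P.1 P.2
      with hTdef
    have hint : ∫ ω, T ω ∂(gnp n (p n)) = (A.card : ℝ) * r ^ (M * M) := by
      rw [hTdef]
      rw [integral_finset_sum _ (fun P _ => Integrable.of_finite)]
      have hper : ∀ P ∈ A, (∫ ω, θ ^ edgesBetween ω P.1 P.2 ∂(gnp n (p n))) = r ^ (M * M) := by
        intro P hP
        obtain ⟨hd, h1, h2⟩ := (Finset.mem_filter.mp hP).2
        rw [pair_exp (p n) θ hp0 hp1 P.1 P.2 hd, h1, h2]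
      rw [Finset.sum_congr rfl hper, Finset.sum_const, nsmul_eq_mul]
    have hTnn : ∀ ω, 0 ≤ T ω := fun ω => Finset.sum_nonneg fun P _ => pow_nonneg hθ0 _
    have hcard : (A.card : ℝ) ≤ ((n.choose M : ℝ)) ^ 2 := by
      have hsub : A ⊆ (Finset.univ.powersetCard M) ×ˢ (Finset.univ.powersetCard M) := by
        intro P hP
        obtain ⟨_, h1, h2⟩ := (Finset.mem_filter.mp hP).2
        rw [Finset.mem_product, Finset.mem_powersetCard_univ, Finset.mem_powersetCard_univ]
        exact ⟨h1, h2⟩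
      have := Finset.card_le_card hsub
      rw [Finset.card_product, Finset.card_powersetCard, Finset.card_univ,
        Fintype.card_fin] at this
      calc (A.card : ℝ) ≤ ((n.choose M * n.choose M : ℕ) : ℝ) := by exact_mod_cast this
        _ = ((n.choose M : ℝ)) ^ 2 := by push_cast; ring
    have hIE : ∫ ω, T ω ∂(gnp n (p n)) ≤ E n := by
      rw [hint, hEdef]
      exact mul_le_mul_of_nonneg_right hcard (pow_nonneg hr0 _)
    have hI0 : 0 ≤ ∫ ω, T ω ∂(gnp n (p n)) :=
      integral_nonneg hTnn
    have hmarkov := mul_meas_ge_le_integral_of_nonneg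
      (μ := gnp n (p n)) (f := T) (ae_of_all _ hTnn) Integrable.of_finite η
    have hbad_le : gnp n (p n) {ω | η ≤ T ω} ≤ ENNReal.ofReal (E n / η) := by
      rw [ENNReal.le_ofReal_iff_toReal_le (measure_ne_top _ _)
        (div_nonneg (le_trans hI0 hIE) hη.le)]
      rw [le_div_iff₀ hη]
      calc (gnp n (p n) {ω | η ≤ T ω}).toReal * η
          = η * (gnp n (p n) {ω | η ≤ T ω}).toReal := by ring
        _ ≤ ∫ ω, T ω ∂(gnp n (p n)) := hmarkov
        _ ≤ E n := hIE
    have hmeas : MeasurableSet {ω : Sym2 (Fin n) → Bool | T ω ≤ η} :=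
      (Set.to_countable _).measurableSet
    have hgood : gnp n (p n) {ω | T ω ≤ η}
        = 1 - gnp n (p n) {ω | T ω ≤ η}ᶜ := by
      have := prob_compl_eq_one_sub (μ := gnp n (p n)) hmeas.compl
      rw [compl_compl] at this
      exact this
    have hsub2 : {ω : Sym2 (Fin n) → Bool | T ω ≤ η}ᶜ ⊆ {ω | η ≤ T ω} := by
      intro ω hω
      simp only [Set.mem_compl_iff, Set.mem_setOf_eq, not_le] at hω
      exact hω.le
    calc 1 - ENNReal.ofReal (E n / η)
        ≤ 1 - gnp n (p n) {ω | T ω ≤ η}ᶜ :=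
          tsub_le_tsub_left ((measure_mono hsub2).trans hbad_le) 1
      _ = gnp n (p n) {ω | T ω ≤ η} := hgood.symm
  have h0 : Tendsto (fun n : ℕ => ENNReal.ofReal (E n / η)) atTop (nhds 0) := by
    have hdiv : Tendsto (fun n : ℕ => E n / η) atTop (nhds 0) := by
      simpa using hE.div_const η
    have := (ENNReal.continuous_ofReal.tendsto 0).comp hdiv
    simpa [Function.comp_def] using this
  have hlow : Tendsto (fun n : ℕ => 1 - ENNReal.ofReal (E n / η)) atTop (nhds 1) := by
    have hc : Continuous (fun x : ENNReal => 1 - x) :=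
      ENNReal.continuous_sub_left ENNReal.one_ne_top
    have := (hc.tendsto 0).comp h0
    simpa [Function.comp_def] using this
  exact tendsto_of_tendsto_of_tendsto_of_le_of_le' hlow tendsto_const_nhds key
    (Filter.Eventually.of_forall fun n => prob_le_one)


/-- Lemma 4.12: there is `λ > 0` such that, with
`m = ⌈λ n log log n / log n⌉`, `Σ_{X,Y} (q/(q+1))^{e_G(X,Y)}` (over disjoint pairs of
`m`-sets) tends to 0 in probability. -/
theorem stmt_11 (ε : ℝ) (hε : 0 < ε) (q : ℕ) (hq : 1 ≤ q)
    (p : ℕ → ℝ) (hp : ∀ n : ℕ, p n = ((q : ℝ) + 1 + ε) * Real.log n / n) :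
    ∃ lam : ℝ, 0 < lam ∧ ∀ η : ℝ, 0 < η →
      Tendsto
        (fun n : ℕ => gnp n (p n)
          {ω | ∑ P ∈ (Finset.univ : Finset (Finset (Fin n) × Finset (Fin n))).filter
                (fun P => Disjoint P.1 P.2 ∧
                  P.1.card = ⌈lam * n * Real.log (Real.log n) / Real.log n⌉₊ ∧
                  P.2.card = ⌈lam * n * Real.log (Real.log n) / Real.log n⌉₊),
              ((q : ℝ) / ((q : ℝ) + 1)) ^ (edgesBetween ω P.1 P.2) ≤ η})
        atTop (nhds 1) := by
  have hq1 : (0:ℝ) < (q : ℝ) + 1 := by positivity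
  set θ : ℝ := (q : ℝ) / ((q : ℝ) + 1) with hθ
  have hθ0 : 0 ≤ θ := by positivity
  have hθ1 : θ ≤ 1 := by rw [hθ, div_le_one hq1]; linarith
  have h1θ : 1 - θ = 1 / ((q : ℝ) + 1) := by
    rw [hθ]; field_simp; ring
  refine ⟨5, by norm_num, fun η hη => ?_⟩
  set m : ℕ → ℕ := fun n => ⌈(5:ℝ) * (n:ℝ) * Real.log (Real.log n) / Real.log n⌉₊ with hm
  -- eventual facts
  have hlogn : Tendsto (fun n : ℕ => Real.log n) atTop atTop :=
    Real.tendsto_log_atTop.comp tendsto_natCast_atTop_atTop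
  have hloglog : Tendsto (fun n : ℕ => Real.log (Real.log n)) atTop atTop :=
    Real.tendsto_log_atTop.comp hlogn
  have hcpos : (0:ℝ) < (q : ℝ) + 1 + ε := by positivity
  have hp01 : ∀ᶠ n in atTop, 0 ≤ p n ∧ p n ≤ 1 := by
    have hlo := Real.isLittleO_log_id_atTop.def (show (0:ℝ) < 1 / ((q : ℝ) + 1 + ε) by positivity)
    have hlo' := tendsto_natCast_atTop_atTop.eventually hlo
    filter_upwards [hlo', eventually_ge_atTop 1] with n hlog hn1
    have hn0 : (0:ℝ) < (n:ℝ) := by exact_mod_cast Nat.lt_of_lt_of_le Nat.zero_lt_one hn1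
    have hln0 : 0 ≤ Real.log n := Real.log_natCast_nonneg n
    constructor
    · rw [hp n]; positivity
    · rw [hp n, div_le_one hn0]
      simp only [id_eq, Real.norm_eq_abs, abs_of_nonneg hln0, abs_of_nonneg hn0.le] at hlog
      calc ((q : ℝ) + 1 + ε) * Real.log n ≤ ((q : ℝ) + 1 + ε) * (1 / ((q : ℝ) + 1 + ε) * n) :=
            mul_le_mul_of_nonneg_left hlog hcpos.le
        _ = (n : ℝ) := by field_simp
  refine tendsto_good θ hθ0 hθ1 p m hp01 ?_ η hη
  -- the expectation bound tends to zero
  have hbound : ∀ᶠ n in atTop,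
      ((n.choose (m n) : ℝ)) ^ 2 * (1 - p n * (1 - θ)) ^ (m n * m n)
        ≤ Real.exp (-(Real.log (Real.log n))) ∧
      0 ≤ ((n.choose (m n) : ℝ)) ^ 2 * (1 - p n * (1 - θ)) ^ (m n * m n) := by
    filter_upwards [hp01, hlogn.eventually_gt_atTop 0, hloglog.eventually_ge_atTop 1,
      eventually_ge_atTop 1] with n hp' hln hLL hn1
    obtain ⟨hp0, hp1⟩ := hp'
    set L : ℝ := Real.log (Real.log n) with hLdef
    set ln : ℝ := Real.log n with hlndef
    have hL0 : (0:ℝ) < L := lt_of_lt_of_le zero_lt_one hLL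
    have hn0 : (0:ℝ) < (n:ℝ) := by exact_mod_cast Nat.lt_of_lt_of_le Nat.zero_lt_one hn1
    set M : ℕ := m n with hMdef
    have hMge : (5:ℝ) * (n:ℝ) * L / ln ≤ (M:ℝ) := Nat.le_ceil _
    have hval_pos : (0:ℝ) < (5:ℝ) * (n:ℝ) * L / ln := by positivity
    have hM1 : 1 ≤ M := Nat.one_le_ceil_iff.mpr hval_pos
    have hMpos : (0:ℝ) < (M:ℝ) := by exact_mod_cast Nat.lt_of_lt_of_le Nat.zero_lt_one hM1
    set r : ℝ := 1 - p n * (1 - θ) with hrdef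
    have hr0 : 0 ≤ r := by
      have := mul_le_one₀ (a := p n) (b := 1 - θ) hp1 (by linarith) (by linarith)
      simp only [hrdef]; linarith
    have he1 : (0:ℝ) < Real.exp 1 := Real.exp_pos 1
    -- choose bound
    have hchoose : (n.choose M : ℝ) ≤ (Real.exp 1 * (n:ℝ) / (M:ℝ)) ^ M := by
      have h1 : (n.choose M : ℝ) ≤ (n:ℝ) ^ M / (M.factorial : ℝ) :=
        Nat.choose_le_pow_div M n
      have h2 : ((M:ℝ)) ^ M / (M.factorial : ℝ) ≤ Real.exp M :=
        Real.pow_div_factorial_le_exp (M:ℝ) (by positivity) M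
      have hfac : (0:ℝ) < (M.factorial : ℝ) := by exact_mod_cast M.factorial_pos
      have h3 : (n:ℝ) ^ M / (M.factorial : ℝ)
          = ((n:ℝ) / (M:ℝ)) ^ M * ((M:ℝ) ^ M / (M.factorial : ℝ)) := by
        rw [div_pow]
        field_simp
      have h4 : (n:ℝ) ^ M / (M.factorial : ℝ) ≤ ((n:ℝ) / (M:ℝ)) ^ M * Real.exp M := by
        rw [h3]
        exact mul_le_mul_of_nonneg_left h2 (by positivity)
      have h5 : ((n:ℝ) / (M:ℝ)) ^ M * Real.exp M = (Real.exp 1 * (n:ℝ) / (M:ℝ)) ^ M := by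
        rw [← Real.exp_one_pow, ← mul_pow]
        congr 1
        ring
      calc (n.choose M : ℝ) ≤ (n:ℝ) ^ M / (M.factorial : ℝ) := h1
        _ ≤ ((n:ℝ) / (M:ℝ)) ^ M * Real.exp M := h4
        _ = (Real.exp 1 * (n:ℝ) / (M:ℝ)) ^ M := h5
    have hq_ratio : ln / (n:ℝ) ≤ p n * (1 - θ) := by
      rw [hp n, h1θ, ← hlndef]
      have h6 : ((q : ℝ) + 1 + ε) * ln / (n:ℝ) * (1 / ((q : ℝ) + 1)) =
          (ln / (n:ℝ)) * (((q : ℝ) + 1 + ε) / ((q : ℝ) + 1)) := by ring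
      rw [h6]
      have h7 : (1:ℝ) ≤ ((q : ℝ) + 1 + ε) / ((q : ℝ) + 1) := by
        rw [le_div_iff₀ hq1]; linarith
      calc ln / (n:ℝ) = (ln / (n:ℝ)) * 1 := by ring
        _ ≤ (ln / (n:ℝ)) * (((q : ℝ) + 1 + ε) / ((q : ℝ) + 1)) :=
            mul_le_mul_of_nonneg_left h7 (by positivity)
    -- r^M ≤ exp(-(5 L))
    have hrM : r ^ M ≤ Real.exp (-(5 * L)) := by
      have hstep : r ≤ Real.exp (-(p n * (1 - θ))) := by
        have := Real.add_one_le_exp (-(p n * (1 - θ)))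
        simp only [hrdef]; linarith
      have h8 : r ^ M ≤ Real.exp (-(p n * (1 - θ))) ^ M :=
        pow_le_pow_left₀ hr0 hstep M
      have h9 : Real.exp (-(p n * (1 - θ))) ^ M = Real.exp ((M:ℝ) * (-(p n * (1 - θ)))) := by
        rw [Real.exp_nat_mul]
      have h10 : (M:ℝ) * (-(p n * (1 - θ))) ≤ -(5 * L) := by
        have h11 : 5 * L ≤ (M:ℝ) * (p n * (1 - θ)) := by
          calc 5 * L = (5 * (n:ℝ) * L / ln) * (ln / (n:ℝ)) := by field_simp
            _ ≤ (M:ℝ) * (ln / (n:ℝ)) :=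
                mul_le_mul_of_nonneg_right hMge (by positivity)
            _ ≤ (M:ℝ) * (p n * (1 - θ)) :=
                mul_le_mul_of_nonneg_left hq_ratio hMpos.le
        linarith
      calc r ^ M ≤ Real.exp (-(p n * (1 - θ))) ^ M := h8
        _ = Real.exp ((M:ℝ) * (-(p n * (1 - θ)))) := h9
        _ ≤ Real.exp (-(5 * L)) := Real.exp_le_exp.mpr h10
    -- e n / M bound
    have hnM : Real.exp 1 * (n:ℝ) / (M:ℝ) ≤ Real.exp (1 + L) := by
      have h12 : (n:ℝ) / (M:ℝ) ≤ ln / (5 * L) := by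
        rw [div_le_div_iff₀ hMpos (by positivity)]
        have h13 : (n:ℝ) * (5 * L) / ln ≤ (M:ℝ) := by
          calc (n:ℝ) * (5 * L) / ln = 5 * (n:ℝ) * L / ln := by ring
            _ ≤ (M:ℝ) := hMge
        calc (n:ℝ) * (5 * L) = ((n:ℝ) * (5 * L) / ln) * ln := by field_simp
          _ ≤ (M:ℝ) * ln := mul_le_mul_of_nonneg_right h13 hln.le
          _ = ln * (M:ℝ) := by ring
      have h14 : ln / (5 * L) ≤ ln := by
        apply div_le_self hln.le
        linarith
      have h15 : Real.exp (1 + L) = Real.exp 1 * ln := by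
        rw [Real.exp_add, hLdef, Real.exp_log hln]
      rw [h15, mul_div_assoc]
      exact mul_le_mul_of_nonneg_left (h12.trans h14) he1.le
    -- combine
    have hEn : ((n.choose M : ℝ)) ^ 2 * r ^ (M * M) ≤ Real.exp (-L) := by
      have h16 : ((n.choose M : ℝ)) ^ 2 ≤ ((Real.exp 1 * (n:ℝ) / (M:ℝ)) ^ 2) ^ M := by
        rw [← pow_right_comm]
        exact pow_le_pow_left₀ (by positivity) hchoose 2
      have h17 : r ^ (M * M) = (r ^ M) ^ M := by rw [pow_mul]
      have h18 : ((n.choose M : ℝ)) ^ 2 * r ^ (M * M)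
          ≤ ((Real.exp 1 * (n:ℝ) / (M:ℝ)) ^ 2) ^ M * (Real.exp (-(5 * L))) ^ M := by
        rw [h17]
        exact mul_le_mul h16 (pow_le_pow_left₀ (pow_nonneg hr0 M) hrM M)
          (pow_nonneg (pow_nonneg hr0 M) M) (by positivity)
      have h19 : ((Real.exp 1 * (n:ℝ) / (M:ℝ)) ^ 2) ^ M * (Real.exp (-(5 * L))) ^ M
          = ((Real.exp 1 * (n:ℝ) / (M:ℝ)) ^ 2 * Real.exp (-(5 * L))) ^ M := by
        rw [mul_pow]
      have h20 : (Real.exp 1 * (n:ℝ) / (M:ℝ)) ^ 2 * Real.exp (-(5 * L))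
          ≤ Real.exp (-L) := by
        calc (Real.exp 1 * (n:ℝ) / (M:ℝ)) ^ 2 * Real.exp (-(5 * L))
            ≤ (Real.exp (1 + L)) ^ 2 * Real.exp (-(5 * L)) :=
              mul_le_mul_of_nonneg_right (pow_le_pow_left₀ (by positivity) hnM 2)
                (Real.exp_pos _).le
          _ = Real.exp (2 * (1 + L) + -(5 * L)) := by
              rw [← Real.exp_nat_mul]
              rw [← Real.exp_add]
              norm_num
          _ ≤ Real.exp (-L) := by
              apply Real.exp_le_exp.mpr
              linarith
      have h21 : ((Real.exp 1 * (n:ℝ) / (M:ℝ)) ^ 2 * Real.exp (-(5 * L))) ^ M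
          ≤ (Real.exp (-L)) ^ M :=
        pow_le_pow_left₀ (by positivity) h20 M
      have h22 : (Real.exp (-L)) ^ M ≤ Real.exp (-L) := by
        have := pow_le_pow_of_le_one (Real.exp_pos (-L)).le
          (Real.exp_le_one_iff.mpr (by linarith)) hM1
        simpa using this
      calc ((n.choose M : ℝ)) ^ 2 * r ^ (M * M)
          ≤ ((Real.exp 1 * (n:ℝ) / (M:ℝ)) ^ 2 * Real.exp (-(5 * L))) ^ M := by
            rw [← h19]; exact h18
        _ ≤ (Real.exp (-L)) ^ M := h21
        _ ≤ Real.exp (-L) := h22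
    exact ⟨hEn, by positivity⟩
  have hgoal := squeeze_zero' (hbound.mono fun n h => h.2) (hbound.mono fun n h => h.1)
    (Real.tendsto_exp_neg_atTop_nhds_zero.comp hloglog)
  exact hgoal
end

section
/- Let c > 0 be a constant, let G ~ G(n,p) where p = c·log n / n, and let α = α(n) and k = k(n) be functions of n such that α·k·log n → ∞ as n → ∞. Let r > 0 be a constant satisfying r ≥ 4·c·α·(k+1)² (for all n). Then asymptotically almost surely, every spanning subgraph G' ⊆ G with minimum degree δ(G') ≥ r·log n is an (α·n, k)-expander. -/
open MeasureTheory Filter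

instance (p : ℝ) : IsProbabilityMeasure (bernoulliMeasure p) := by
  unfold bernoulliMeasure; infer_instance

instance (n : ℕ) (p : ℝ) : IsProbabilityMeasure (gnp n p) := by
  unfold gnp; infer_instance

lemma measurableSet_all {n : ℕ} (S : Set (Sym2 (Fin n) → Bool)) : MeasurableSet S := by
  have h1 : MeasurableSingletonClass (Sym2 (Fin n) → Bool) := inferInstance
  exact (Set.toFinite S).measurableSet

lemma bernoulli_true {p : ℝ} (hp1 : p ≤ 1) : bernoulliMeasure p {true} = ENNReal.ofReal p := by
  unfold bernoulliMeasure
  rw [PMF.toMeasure_apply_singleton _ _ (by exact MeasurableSet.of_discrete)]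
  rw [PMF.bernoulli_apply]
  simp only [cond_true]
  rw [min_eq_left (Real.toNNReal_le_one.2 hp1)]
  rfl

lemma gnp_cylinder {n : ℕ} (p : ℝ) (hp1 : p ≤ 1) (T : Finset (Sym2 (Fin n))) :
    gnp n p {ω | ∀ e ∈ T, ω e = true} = ENNReal.ofReal p ^ T.card := by
  have hset : {ω : Sym2 (Fin n) → Bool | ∀ e ∈ T, ω e = true}
      = Set.univ.pi (fun e => if e ∈ T then {true} else Set.univ) := by
    ext ω
    simp only [Set.mem_setOf_eq, Set.mem_pi, Set.mem_univ, forall_true_left]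
    constructor
    · intro h e
      by_cases he : e ∈ T <;> simp [he, h e]
    · intro h e he
      have := h e
      simpa [he] using this
  rw [hset]
  unfold gnp
  rw [MeasureTheory.Measure.pi_pi]
  have : ∀ e : Sym2 (Fin n), bernoulliMeasure p (if e ∈ T then ({true} : Set Bool) else Set.univ)
      = if e ∈ T then ENNReal.ofReal p else 1 := by
    intro e
    by_cases he : e ∈ T
    · simp [he, bernoulli_true hp1]
    · simp only [he, if_false]
      exact measure_univ
  simp_rw [this]
  rw [Finset.prod_ite_mem Finset.univ T (fun _ => ENNReal.ofReal p)]
  rw [Finset.univ_inter, Finset.prod_const]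

lemma edge_true {n : ℕ} {ω : Sym2 (Fin n) → Bool} {e : Sym2 (Fin n)}
    (he : e ∈ (graphOf ω).edgeFinset) : ω e = true := by
  rw [SimpleGraph.mem_edgeFinset] at he
  induction e
  case _ a b => exact ((graphOf ω).mem_edgeSet.1 he).2

lemma prob_dense {n : ℕ} (p : ℝ) (hp1 : p ≤ 1) (F : Finset (Sym2 (Fin n))) (M : ℕ) :
    gnp n p {ω | M ≤ ((graphOf ω).edgeFinset ∩ F).card}
      ≤ (F.card.choose M : ENNReal) * ENNReal.ofReal p ^ M := by
  have hsub : {ω : Sym2 (Fin n) → Bool | M ≤ ((graphOf ω).edgeFinset ∩ F).card}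
      ⊆ ⋃ T ∈ F.powersetCard M, {ω | ∀ e ∈ T, ω e = true} := by
    intro ω hω
    obtain ⟨T, hTsub, hTcard⟩ := Finset.exists_subset_card_eq hω
    refine Set.mem_iUnion₂.2 ⟨T, ?_, ?_⟩
    · exact Finset.mem_powersetCard.2 ⟨hTsub.trans (Finset.inter_subset_right), hTcard⟩
    · intro e he
      exact edge_true (Finset.mem_of_subset (hTsub.trans Finset.inter_subset_left) he)
  calc gnp n p {ω | M ≤ ((graphOf ω).edgeFinset ∩ F).card}
      ≤ gnp n p (⋃ T ∈ F.powersetCard M, {ω | ∀ e ∈ T, ω e = true}) := measure_mono hsub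
    _ ≤ ∑ T ∈ F.powersetCard M, gnp n p {ω | ∀ e ∈ T, ω e = true} :=
        measure_biUnion_finset_le _ _
    _ = ∑ T ∈ F.powersetCard M, ENNReal.ofReal p ^ T.card := by
        exact Finset.sum_congr rfl (fun T _ => gnp_cylinder p hp1 T)
    _ = ∑ T ∈ F.powersetCard M, ENNReal.ofReal p ^ M := by
        refine Finset.sum_congr rfl (fun T hT => ?_)
        rw [(Finset.mem_powersetCard.1 hT).2]
    _ = (F.card.choose M : ENNReal) * ENNReal.ofReal p ^ M := by
        rw [Finset.sum_const, Finset.card_powersetCard, nsmul_eq_mul]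

open Finset in
noncomputable def pairsF {n : ℕ} (U S : Finset (Fin n)) : Finset (Sym2 (Fin n)) :=
  U.offDiag.image (fun q => s(q.1, q.2)) ∪ (U ×ˢ S).image (fun q => s(q.1, q.2))

open Finset in
lemma pairsF_mono {n : ℕ} (U : Finset (Fin n)) {S S' : Finset (Fin n)} (h : S ⊆ S') :
    pairsF U S ⊆ pairsF U S' := by
  unfold pairsF
  apply Finset.union_subset_union_right
  apply Finset.image_subset_image
  exact Finset.product_subset_product_right h

open Finset in
lemma mem_pairsF {n : ℕ} {U S : Finset (Fin n)} {v w : Fin n}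
    (hv : v ∈ U) (hw : w ∈ U ∪ S) (hvw : v ≠ w) : s(v, w) ∈ pairsF U S := by
  rcases Finset.mem_union.1 hw with h | h
  · exact Finset.mem_union_left _ (Finset.mem_image.2 ⟨(v, w), Finset.mem_offDiag.2 ⟨hv, h, hvw⟩, rfl⟩)
  · exact Finset.mem_union_right _ (Finset.mem_image.2 ⟨(v, w), Finset.mem_product.2 ⟨hv, h⟩, rfl⟩)

open Finset in
lemma pairsF_card {n : ℕ} (U S : Finset (Fin n)) :
    2 * (pairsF U S).card ≤ U.card * U.card - U.card + 2 * (U.card * S.card) := by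
  have hA : 2 * (U.offDiag.image (fun q : Fin n × Fin n => s(q.1, q.2))).card ≤ U.offDiag.card := by
    rw [Finset.card_eq_sum_card_image (fun q : Fin n × Fin n => s(q.1, q.2)) U.offDiag]
    have h2 : ∀ e ∈ U.offDiag.image (fun q : Fin n × Fin n => s(q.1, q.2)),
        2 ≤ (U.offDiag.filter (fun a => s(a.1, a.2) = e)).card := by
      intro e he
      obtain ⟨⟨a, b⟩, hab, habe⟩ := Finset.mem_image.1 he
      have hne : a ≠ b := (Finset.mem_offDiag.1 hab).2.2
      have hba : (b, a) ∈ U.offDiag := by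
        rcases Finset.mem_offDiag.1 hab with ⟨h1, h2, h3⟩
        exact Finset.mem_offDiag.2 ⟨h2, h1, h3.symm⟩
      have hsub : ({(a,b), (b,a)} : Finset (Fin n × Fin n))
          ⊆ U.offDiag.filter (fun q => s(q.1, q.2) = e) := by
        intro x hx
        rcases Finset.mem_insert.1 hx with h | h
        · subst h; exact Finset.mem_filter.2 ⟨hab, habe⟩
        · rw [Finset.mem_singleton.1 h]
          refine Finset.mem_filter.2 ⟨hba, ?_⟩
          rw [← habe]; exact Sym2.eq_swap
      have hcard2 : ({(a,b), (b,a)} : Finset (Fin n × Fin n)).card = 2 :=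
        Finset.card_pair (by simp [hne])
      calc 2 = ({(a,b), (b,a)} : Finset (Fin n × Fin n)).card := hcard2.symm
        _ ≤ _ := Finset.card_le_card hsub
    calc 2 * (U.offDiag.image (fun q : Fin n × Fin n => s(q.1, q.2))).card
        = ∑ _e ∈ U.offDiag.image (fun q : Fin n × Fin n => s(q.1, q.2)), 2 := by
          rw [Finset.sum_const, smul_eq_mul, mul_comm]
      _ ≤ ∑ e ∈ U.offDiag.image (fun q : Fin n × Fin n => s(q.1, q.2)),
            (U.offDiag.filter (fun a => s(a.1, a.2) = e)).card :=
          Finset.sum_le_sum h2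
  have hB : ((U ×ˢ S).image (fun q : Fin n × Fin n => s(q.1, q.2))).card ≤ U.card * S.card := by
    calc _ ≤ (U ×ˢ S).card := Finset.card_image_le
      _ = U.card * S.card := Finset.card_product _ _
  have hF : (pairsF U S).card ≤ (U.offDiag.image (fun q : Fin n × Fin n => s(q.1, q.2))).card
      + ((U ×ˢ S).image (fun q : Fin n × Fin n => s(q.1, q.2))).card := Finset.card_union_le _ _
  have hoff : U.offDiag.card = U.card * U.card - U.card := Finset.offDiag_card U
  omega

open Finset in
lemma double_count {n : ℕ} (ω : Sym2 (Fin n) → Bool) (G' : SimpleGraph (Fin n))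
    (hle : G' ≤ graphOf ω) (R : ℝ)
    (U S : Finset (Fin n))
    (hdeg : ∀ v ∈ U, R ≤ ((G'.neighborSet v).ncard : ℝ))
    (hnbr : ∀ v ∈ U, ∀ w : Fin n, G'.Adj v w → w ∈ U ∪ S) :
    (U.card : ℝ) * R ≤ 2 * ((((graphOf ω).edgeFinset ∩ pairsF U S)).card : ℝ) := by
  classical
  have hdec : DecidableRel G'.Adj := Classical.decRel _
  -- sigma set of (vertex, neighbor) pairs
  set D : Finset ((_ : Fin n) × Fin n) := U.sigma (fun v => G'.neighborFinset v) with hD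
  have hcardD : D.card = ∑ v ∈ U, (G'.neighborFinset v).card := Finset.card_sigma U _
  have hncard : ∀ v : Fin n, ((G'.neighborSet v).ncard : ℝ) = ((G'.neighborFinset v).card : ℝ) := by
    intro v
    congr 1
    rw [Set.ncard_eq_toFinset_card', SimpleGraph.neighborFinset_def]
  have hlower : (U.card : ℝ) * R ≤ (D.card : ℝ) := by
    rw [hcardD]
    push_cast
    calc (U.card : ℝ) * R = ∑ _v ∈ U, R := by rw [Finset.sum_const, nsmul_eq_mul, mul_comm]
      _ ≤ ∑ v ∈ U, ((G'.neighborFinset v).card : ℝ) := by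
          apply Finset.sum_le_sum
          intro v hv
          rw [← hncard v]; exact hdeg v hv
  -- map into edges
  have hmaps : ∀ q ∈ D, (fun q : (_ : Fin n) × Fin n => s(q.1, q.2)) q
      ∈ (graphOf ω).edgeFinset ∩ pairsF U S := by
    intro q hq
    rcases Finset.mem_sigma.1 hq with ⟨hq1, hq2⟩
    have hadj : G'.Adj q.1 q.2 := (SimpleGraph.mem_neighborFinset _ _ _).1 hq2
    have hadjω : (graphOf ω).Adj q.1 q.2 := hle hadj
    refine Finset.mem_inter.2 ⟨?_, ?_⟩
    · rw [SimpleGraph.mem_edgeFinset]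
      exact (graphOf ω).mem_edgeSet.2 hadjω
    · exact mem_pairsF hq1 (hnbr q.1 hq1 q.2 hadj) hadj.ne
  have himage : D.image (fun q : (_ : Fin n) × Fin n => s(q.1, q.2))
      ⊆ (graphOf ω).edgeFinset ∩ pairsF U S := by
    intro e he
    obtain ⟨q, hq, hqe⟩ := Finset.mem_image.1 he
    exact hqe ▸ hmaps q hq
  have hfiber : D.card ≤ 2 * (D.image (fun q : (_ : Fin n) × Fin n => s(q.1, q.2))).card := by
    rw [Finset.card_eq_sum_card_image (fun q : (_ : Fin n) × Fin n => s(q.1, q.2)) D]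
    have h2 : ∀ e ∈ D.image (fun q : (_ : Fin n) × Fin n => s(q.1, q.2)),
        (D.filter (fun q => s(q.1, q.2) = e)).card ≤ 2 := by
      intro e he
      obtain ⟨⟨a, b⟩, _, habe⟩ := Finset.mem_image.1 he
      have hsub : D.filter (fun q => s(q.1, q.2) = e) ⊆ {⟨a, b⟩, ⟨b, a⟩} := by
        intro q hq
        have hqe : s(q.1, q.2) = s(a, b) := by
          rw [habe]; exact (Finset.mem_filter.1 hq).2
        rcases Sym2.eq_iff.1 hqe with ⟨h1, h2⟩ | ⟨h1, h2⟩
        · apply Finset.mem_insert.2; left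
          cases q; simp_all
        · apply Finset.mem_insert.2; right
          cases q; simp_all
      calc (D.filter (fun q => s(q.1, q.2) = e)).card ≤ ({⟨a, b⟩, ⟨b, a⟩} :
            Finset ((_ : Fin n) × Fin n)).card := Finset.card_le_card hsub
        _ ≤ 2 := Finset.card_insert_le _ _ |>.trans (by simp)
    calc ∑ e ∈ D.image (fun q : (_ : Fin n) × Fin n => s(q.1, q.2)),
          (D.filter (fun q => s(q.1, q.2) = e)).card
        ≤ ∑ _e ∈ D.image (fun q : (_ : Fin n) × Fin n => s(q.1, q.2)), 2 :=
          Finset.sum_le_sum h2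
      _ = 2 * (D.image (fun q : (_ : Fin n) × Fin n => s(q.1, q.2))).card := by
          rw [Finset.sum_const, smul_eq_mul, mul_comm]
  have hcardle : (D.card : ℝ) ≤ 2 * ((((graphOf ω).edgeFinset ∩ pairsF U S)).card : ℝ) := by
    have h1 : (D.image (fun q : (_ : Fin n) × Fin n => s(q.1, q.2))).card
        ≤ (((graphOf ω).edgeFinset ∩ pairsF U S)).card := Finset.card_le_card himage
    have h2 : D.card ≤ 2 * (((graphOf ω).edgeFinset ∩ pairsF U S)).card := by omega
    exact_mod_cast Nat.cast_le.2 h2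
  linarith
set_option maxHeartbeats 1000000
lemma phi_mono {nR a b : ℝ} (ha : 0 < a) (hab : a ≤ b) (hbn : b ≤ nR) :
    a * (1 + Real.log nR - Real.log a) ≤ b * (1 + Real.log nR - Real.log b) := by
  have hb : 0 < b := lt_of_lt_of_le ha hab
  have h1 : Real.log b - Real.log a ≤ b / a - 1 := by
    rw [← Real.log_div hb.ne' ha.ne']
    exact Real.log_le_sub_one_of_pos (div_pos hb ha)
  have h1' : a * (Real.log b - Real.log a) ≤ b - a := by
    have h2 := mul_le_mul_of_nonneg_left h1 ha.le
    calc a * (Real.log b - Real.log a) ≤ a * (b / a - 1) := h2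
      _ = b - a := by field_simp
  have h2 : Real.log b ≤ Real.log nR := Real.log_le_log hb hbn
  nlinarith

lemma keyineq (c r K αx ln X : ℝ)
    (hc : 0 < c) (hr : 0 < r) (hK : 0 < K) (hα : 0 < αx)
    (hln : 1 ≤ ln)
    (hcon : 4*c*αx*(K+1)^2 ≤ r)
    (hG : 107/c + 1 ≤ αx*K*ln)
    (hn1 : 3 + 2*Real.log ln ≤ 0.14*(r*ln))
    (hn2 : 2*Real.sqrt ln*Real.log ln ≤ 0.018*(r*ln))
    (hn3 : 4 ≤ r*ln)
    (hX0 : 0 ≤ X) (hXL : -Real.log αx ≤ X) :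
    (1+X) + K*(1 + max 0 (-Real.log K) + X)
      + (r*ln/2)*(1 - Real.log (4*(K+1)^2/(2*K+1)) + (-Real.log αx) - X)
      ≤ -(r*(Real.log 4 - 1)/8) * ln := by
  have hln0 : (0:ℝ) < ln := lt_of_lt_of_le one_pos hln
  set R := r * ln with hR
  set L := -Real.log αx with hL
  set lK := Real.log K with hlK
  set lln := Real.log ln with hlln
  have hlln0 : 0 ≤ lln := Real.log_nonneg hln
  have hR0 : 0 < R := mul_pos hr hln0
  set G := αx*K*ln with hGdef
  have hG1 : 1 ≤ G := by
    have h107 : (0:ℝ) < 107/c := div_pos (by norm_num) hc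
    linarith
  have hGpos : 0 < G := lt_of_lt_of_le one_pos hG1
  have hpos4 : (0:ℝ) < 4*c*αx*ln := by positivity
  have hKR : 4*c*G*K ≤ R := by
    have h0 : 4*c*αx*K^2*ln ≤ 4*c*αx*(K+1)^2*ln := by linarith [mul_pos hpos4 hK, hpos4]
    have h1 : 4*c*αx*(K+1)^2*ln ≤ r*ln := by
      have := mul_le_mul_of_nonneg_right hcon hln0.le
      linarith
    calc 4*c*G*K = 4*c*αx*K^2*ln := by rw [hGdef]; ring
      _ ≤ r*ln := le_trans h0 h1
  have hcG : 428 ≤ 4*c*G := by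
    have h1 : c*(107/c+1) ≤ c*G := mul_le_mul_of_nonneg_left hG hc.le
    have h2 : c*(107/c+1) = 107 + c := by field_simp
    have h3 : 0 < c*G := by positivity
    linarith
  have hK428 : 428 * K ≤ R := by linarith [mul_le_mul_of_nonneg_right hcG hK.le, hKR]
  have hslope : 1 + K ≤ R/2 := by linarith
  have hl2a : (0.6931:ℝ) < Real.log 2 := by linarith [Real.log_two_gt_d9]
  have hl2b : Real.log 2 < 0.6932 := by linarith [Real.log_two_lt_d9]
  have hlog4 : Real.log 4 = 2 * Real.log 2 := by
    rw [show (4:ℝ) = 2^2 by norm_num, Real.log_pow]; push_cast; ring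
  have hlog4a : (1.3862:ℝ) < Real.log 4 := by rw [hlog4]; linarith
  have hlog4b : Real.log 4 < 1.3864 := by rw [hlog4]; linarith
  set X₀ := max L 0 with hX₀def
  have hXX₀ : X₀ ≤ X := max_le hXL hX0
  have hX₀pos : 0 ≤ X₀ := le_max_right _ _
  set ℓ₂ := Real.log (4*(K+1)^2/(2*K+1)) with hℓ₂
  have h2K1 : (0:ℝ) < 2*K+1 := by linarith
  have hℓ₂a : Real.log 4 ≤ ℓ₂ := by
    apply Real.log_le_log (by norm_num)
    rw [le_div_iff₀ h2K1]; linarith [sq_nonneg K]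
  have hℓ₂b : Real.log (2*(K+1)) ≤ ℓ₂ := by
    apply Real.log_le_log (by positivity)
    rw [le_div_iff₀ h2K1]; linarith [sq_nonneg K]
  set m := max (Real.log 4) (Real.log (2*(K+1))) - 1 with hm
  have hmlog4 : Real.log 4 - 1 ≤ m := by
    have := le_max_left (Real.log 4) (Real.log (2*(K+1))); simp only [hm]; linarith
  have hm0 : 0 < m := by linarith
  have hℓ₂m : m ≤ ℓ₂ - 1 := by
    simp only [hm]
    rcases max_cases (Real.log 4) (Real.log (2*(K+1))) with ⟨h,_⟩|⟨h,_⟩ <;> rw [h] <;> linarith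
  have hX₀bound : X₀ ≤ max 0 lK + lln := by
    apply max_le
    · have hGlog : 0 ≤ Real.log αx + Real.log (K*ln) := by
        have h0 : 0 ≤ Real.log (αx*(K*ln)) := by
          apply Real.log_nonneg
          calc (1:ℝ) ≤ G := hG1
            _ = αx*(K*ln) := by rw [hGdef]; ring
        rwa [Real.log_mul hα.ne' (by positivity)] at h0
      have hKln : Real.log (K*ln) = lK + lln := Real.log_mul hK.ne' hln0.ne'
      have : L ≤ lK + lln := by rw [hL]; linarith
      calc L ≤ lK + lln := this
        _ ≤ max 0 lK + lln := by gcongr; exact le_max_right _ _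
    · positivity
  set m₀ := max 0 (-lK) with hm₀def
  have hmain : (1+K)*(1+X₀) + K*m₀ ≤ (3*R/8)*m := by
    rcases le_or_gt K 1 with hK1 | hK1
    · have hmaxlK : max 0 lK = 0 := max_eq_left (Real.log_nonpos hK.le hK1)
      have hm₀K : K * m₀ ≤ 1 := by
        have h1 : -lK ≤ 1/K := by
          have h2 := Real.log_le_sub_one_of_pos (show (0:ℝ) < 1/K by positivity)
          rw [Real.log_div one_ne_zero hK.ne'] at h2
          simp only [Real.log_one] at h2
          simp only [hlK]; linarith
        have hm₀le : m₀ ≤ 1/K := max_le (by positivity) h1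
        calc K * m₀ ≤ K * (1/K) := mul_le_mul_of_nonneg_left hm₀le hK.le
          _ = 1 := by field_simp
      have hX₀' : X₀ ≤ lln := by rw [hmaxlK] at hX₀bound; linarith
      have h1 : (1+K)*(1+X₀) ≤ 2*(1+lln) := by
        calc (1+K)*(1+X₀) ≤ 2*(1+X₀) :=
              mul_le_mul_of_nonneg_right (by linarith) (by linarith)
          _ ≤ 2*(1+lln) := by linarith
      have h3 : (0.14:ℝ)*R ≤ (3*R/8)*(Real.log 4 - 1) := by
        have h9 := mul_nonneg hR0.le (show (0:ℝ) ≤ 3*(Real.log 4 - 1)/8 - 0.14 by linarith)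
        linarith
      have h4 : (3*R/8)*(Real.log 4 - 1) ≤ (3*R/8)*m :=
        mul_le_mul_of_nonneg_left hmlog4 (by linarith)
      linarith
    · have hlKpos : 0 ≤ lK := Real.log_nonneg hK1.le
      have hm₀0 : m₀ = 0 := max_eq_left (by linarith)
      have hmaxlK : max 0 lK = lK := max_eq_right hlKpos
      have hX₀' : X₀ ≤ lK + lln := by rw [hmaxlK] at hX₀bound; linarith
      have hmK : 0.1*(1+lK) ≤ m := by
        rcases le_or_gt lK 2.86 with h | h
        · calc 0.1*(1+lK) ≤ 0.386 := by linarith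
            _ ≤ Real.log 4 - 1 := by linarith
            _ ≤ m := hmlog4
        · have h5 : Real.log 2 + lK ≤ Real.log (2*(K+1)) := by
            rw [Real.log_mul two_ne_zero (by positivity)]
            have : lK ≤ Real.log (K+1) := Real.log_le_log hK (by linarith)
            linarith
          have hm2 : lK - 0.307 ≤ m := by
            have := le_max_right (Real.log 4) (Real.log (2*(K+1)))
            simp only [hm]; linarith
          linarith
      have hKsmall : 2*K ≤ 0.01875*R := by linarith
      have ha : 2*K*(1+lK) ≤ 0.01875*R*(1+lK) :=
        mul_le_mul_of_nonneg_right hKsmall (by linarith)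
      have hb : 2*K*lln ≤ 0.01875*R*(1+lK) := by
        rcases le_or_gt lln (2*lK) with h | h
        · have h1 : 2*K*lln ≤ (R/214)*lln := by
            apply mul_le_mul_of_nonneg_right _ hlln0
            linarith
          have h2 : (R/214)*lln ≤ 0.009375*R*lln := by
            linarith [mul_nonneg hR0.le hlln0]
          have h3 : 0.009375*R*lln ≤ 0.01875*R*lK := by
            have h2' := mul_le_mul_of_nonneg_left h (show (0:ℝ) ≤ 0.009375*R by linarith)
            linarith
          linarith [mul_nonneg hR0.le hlKpos, hR0.le]
        · have hKsqrt : K ≤ Real.sqrt ln := by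
            have h1 : K = Real.exp lK := (Real.exp_log hK).symm
            have h2 : Real.sqrt ln = Real.exp (lln/2) := by
              rw [show ln = Real.exp (lln/2) * Real.exp (lln/2) by
                rw [← Real.exp_add, show lln/2+lln/2 = lln by ring, hlln, Real.exp_log hln0]]
              exact Real.sqrt_mul_self (Real.exp_nonneg _)
            rw [h1, h2]
            exact Real.exp_le_exp.2 (by linarith)
          have h3 : 2*K*lln ≤ 2*Real.sqrt ln*lln := by
            apply mul_le_mul_of_nonneg_right _ hlln0
            linarith
          have h4 : (0.018:ℝ)*R ≤ 0.01875*R*(1+lK) := by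
            linarith [mul_nonneg hR0.le hlKpos]
          calc 2*K*lln ≤ 0.018*R := by linarith [hn2]
            _ ≤ 0.01875*R*(1+lK) := h4
      have hcomb : (1+K)*(1+X₀) ≤ 2*K*(1+lK) + 2*K*lln := by
        have h1 : 1+K ≤ 2*K := by linarith
        have h2 : 1+X₀ ≤ 1+lK+lln := by linarith
        calc (1+K)*(1+X₀) ≤ (2*K)*(1+lK+lln) :=
              mul_le_mul h1 h2 (by linarith) (by linarith)
          _ = 2*K*(1+lK) + 2*K*lln := by ring
      have h6 : (1+K)*(1+X₀) ≤ 0.0375*R*(1+lK) := by linarith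
      have h7 : 0.0375*R*(1+lK) ≤ (3*R/8)*(0.1*(1+lK)) := le_of_eq (by ring)
      have h8 : (3*R/8)*(0.1*(1+lK)) ≤ (3*R/8)*m :=
        mul_le_mul_of_nonneg_left hmK (by linarith)
      rw [hm₀0]; linarith
  -- assemble
  have hLX₀ : L - X₀ ≤ 0 := by
    have := le_max_left L (0:ℝ); linarith
  have step1 : (1+X) + K*(1+m₀+X) + (R/2)*(1 - ℓ₂ + L - X)
      ≤ (1+X₀) + K*(1+m₀+X₀) + (R/2)*(1 - ℓ₂ + L - X₀) := by
    linarith [mul_nonneg (by linarith : (0:ℝ) ≤ X - X₀) (by linarith : (0:ℝ) ≤ R/2 - (1+K))]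
  have step2 : (1+X₀) + K*(1+m₀+X₀) + (R/2)*(1 - ℓ₂ + L - X₀)
      ≤ (1+K)*(1+X₀) + K*m₀ + (R/2)*(1-ℓ₂) := by
    linarith [mul_nonpos_of_nonneg_of_nonpos (by linarith : (0:ℝ) ≤ R/2) hLX₀]
  have step3 : (R/2)*(1-ℓ₂) ≤ -(R/2)*m := by
    linarith [mul_nonneg (by linarith : (0:ℝ) ≤ R/2) (by linarith : (0:ℝ) ≤ ℓ₂ - 1 - m)]
  have step6 : -(R/8)*m ≤ -(R/8)*(Real.log 4 - 1) := by
    linarith [mul_nonneg (by linarith : (0:ℝ) ≤ R/8) (by linarith : (0:ℝ) ≤ m - (Real.log 4 - 1))]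
  have hfin : -(R/8)*(Real.log 4 - 1) = -(r*(Real.log 4 - 1)/8) * ln := by rw [hR]; ring
  linarith

lemma log_factorial_ge (m : ℕ) (hm : 1 ≤ m) :
    (m:ℝ)*Real.log m - m ≤ Real.log (m.factorial) := by
  have hm0 : (0:ℝ) < m := by exact_mod_cast hm
  have hf0 : (0:ℝ) < m.factorial := by exact_mod_cast m.factorial_pos
  have h1 : ((m:ℝ))^m/(m.factorial) ≤ Real.exp m := Real.pow_div_factorial_le_exp _ hm0.le m
  have h2 : Real.log ((m:ℝ)^m/(m.factorial)) ≤ (m:ℝ) := by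
    calc Real.log ((m:ℝ)^m/(m.factorial)) ≤ Real.log (Real.exp m) :=
          Real.log_le_log (by positivity) h1
      _ = m := Real.log_exp _
  rw [Real.log_div (by positivity) hf0.ne', Real.log_pow] at h2
  push_cast at h2 ⊢
  linarith

lemma core (c r K αx : ℝ) (n u s M : ℕ)
    (hc : 0 < c) (hr : 0 < r) (hK : 0 < K) (hα : 0 < αx)
    (hcon : 4*c*αx*(K+1)^2 ≤ r)
    (hln : 1 ≤ Real.log n)
    (hG : 107/c + 1 ≤ αx*K*Real.log n)
    (hn1 : 3 + 2*Real.log (Real.log n) ≤ 0.14*(r*Real.log n))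
    (hn2 : 2*Real.sqrt (Real.log n)*Real.log (Real.log n) ≤ 0.018*(r*Real.log n))
    (hn3 : 4 ≤ r*Real.log n)
    (hu1 : 1 ≤ u) (huA : (u:ℝ) ≤ αx*n) (hun : u ≤ n)
    (hs : (s:ℝ) ≤ K*u) (hsn : s ≤ n)
    (hM : u*(r*Real.log n)/2 ≤ (M:ℝ)) :
    (n:ℝ)^u/(u.factorial) * ((n:ℝ)^s/(s.factorial))
      * (((u:ℝ)^2*(2*K+1)/2)^M/(M.factorial)) * (c*Real.log n/(n:ℝ))^M
      ≤ Real.exp (-(r*(Real.log 4 - 1)/8) * u * Real.log n) := by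
  have hu0 : (0:ℝ) < u := by exact_mod_cast hu1
  have hn0 : (0:ℝ) < n := lt_of_lt_of_le hu0 (by exact_mod_cast hun)
  set ln := Real.log n with hlndef
  have hln0 : (0:ℝ) < ln := lt_of_lt_of_le one_pos hln
  have hp0 : (0:ℝ) < c*ln/(n:ℝ) := by positivity
  have hM2 : (2:ℝ) ≤ M := by
    have h1 : (1:ℝ) ≤ (u:ℝ) := by exact_mod_cast hu1
    have : (1:ℝ)*4/2 ≤ u*(r*ln)/2 := by
      apply div_le_div_of_nonneg_right _ (by norm_num)
      calc (1:ℝ)*4 = 4 := by ring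
        _ ≤ 1*(r*ln) := by linarith
        _ ≤ u*(r*ln) := by nlinarith
    linarith
  have hM1 : 1 ≤ M := by exact_mod_cast le_trans (by norm_num : (1:ℝ) ≤ 2) hM2
  have hM0 : (0:ℝ) < M := by linarith
  set X := ln - Real.log u with hX
  have hX0 : 0 ≤ X := by
    have : Real.log u ≤ ln := Real.log_le_log hu0 (by exact_mod_cast hun)
    linarith
  have hXL : -Real.log αx ≤ X := by
    have h1 : Real.log u ≤ Real.log (αx*n) := Real.log_le_log hu0 huA
    rw [Real.log_mul hα.ne' hn0.ne'] at h1
    simp only [hX]; linarith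
  set m₀ := max 0 (-Real.log K) with hm₀
  set Nb := (u:ℝ)^2*(2*K+1)/2 with hNb
  have hNb0 : (0:ℝ) < Nb := by positivity
  have h2K1 : (0:ℝ) < 2*K+1 := by linarith
  -- factor 1
  have hf1 : (n:ℝ)^u/(u.factorial) ≤ Real.exp (u*(1+X)) := by
    have hpos : (0:ℝ) < (n:ℝ)^u/(u.factorial) := by positivity
    rw [← Real.exp_log hpos]
    apply Real.exp_le_exp.2
    rw [Real.log_div (by positivity) (by exact_mod_cast u.factorial_pos.ne'), Real.log_pow]
    have := log_factorial_ge u hu1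
    simp only [hX]; push_cast; nlinarith
  -- factor 2
  have hf2 : (n:ℝ)^s/(s.factorial) ≤ Real.exp (K*u*(1+m₀+X)) := by
    have hbr : (0:ℝ) ≤ K*u*(1+m₀+X) := by
      have : (0:ℝ) ≤ m₀ := le_max_left _ _
      have h2 : (0:ℝ) ≤ 1+m₀+X := by linarith
      positivity
    rcases Nat.eq_zero_or_pos s with hs0 | hs1
    · subst hs0
      simp only [pow_zero, Nat.factorial_zero, Nat.cast_one, div_one]
      calc (1:ℝ) = Real.exp 0 := Real.exp_zero.symm
        _ ≤ _ := Real.exp_le_exp.2 hbr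
    · have hs0 : (0:ℝ) < s := by exact_mod_cast hs1
      have hpos : (0:ℝ) < (n:ℝ)^s/(s.factorial) := by positivity
      rw [← Real.exp_log hpos]
      apply Real.exp_le_exp.2
      rw [Real.log_div (by positivity) (by exact_mod_cast s.factorial_pos.ne'), Real.log_pow]
      have hlf := log_factorial_ge s hs1
      -- φ(s) ≤ φ(min (K*u) n) ≤ K*u*(1+m₀+X)
      have hphi : (s:ℝ)*(1 + ln - Real.log s) ≤ K*u*(1+m₀+X) := by
        have hKu0 : (0:ℝ) < K*u := by positivity
        rcases le_total (K*(u:ℝ)) (n:ℝ) with hcase | hcase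
        · have h1 : (s:ℝ)*(1 + ln - Real.log s) ≤ (K*u)*(1 + ln - Real.log (K*u)) :=
            phi_mono hs0 hs hcase
          have h2 : Real.log (K*u) = Real.log K + Real.log u := Real.log_mul hK.ne' hu0.ne'
          have h3 : -Real.log K ≤ m₀ := le_max_right _ _
          calc (s:ℝ)*(1 + ln - Real.log s) ≤ (K*u)*(1 + ln - Real.log (K*u)) := h1
            _ = (K*u)*(1 + X - Real.log K) := by rw [h2]; simp only [hX]; ring
            _ ≤ (K*u)*(1 + m₀ + X) := by
                apply mul_le_mul_of_nonneg_left _ hKu0.le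
                linarith
        · have h1 : (s:ℝ)*(1 + ln - Real.log s) ≤ (n:ℝ)*(1 + ln - Real.log n) :=
            phi_mono hs0 (by exact_mod_cast hsn) le_rfl
          have h2 : (n:ℝ)*(1 + ln - Real.log n) = n := by
            simp only [hlndef]; ring
          have h3 : (1:ℝ) ≤ 1+m₀+X := by
            have : (0:ℝ) ≤ m₀ := le_max_left _ _
            linarith
          calc (s:ℝ)*(1 + ln - Real.log s) ≤ (n:ℝ) := by rw [← h2]; exact h1
            _ ≤ K*u := hcase
            _ = K*u*1 := by ring
            _ ≤ K*u*(1+m₀+X) := mul_le_mul_of_nonneg_left h3 hKu0.le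
      push_cast at hlf
      linarith
  -- factors 3·4
  have hf34 : Nb^M/(M.factorial) * (c*ln/(n:ℝ))^M
      ≤ Real.exp ((u*(r*ln)/2) * (1 - Real.log (4*(K+1)^2/(2*K+1)) + (-Real.log αx) - X)) := by
    set p := c*ln/(n:ℝ) with hpdef
    set D := 1 - Real.log (4*(K+1)^2/(2*K+1)) + (-Real.log αx) - X with hD
    have hpos : (0:ℝ) < Nb^M/(M.factorial) * p^M := by positivity
    rw [← Real.exp_log hpos]
    apply Real.exp_le_exp.2
    rw [Real.log_mul (by positivity) (by positivity),
        Real.log_div (by positivity) (by exact_mod_cast M.factorial_pos.ne'),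
        Real.log_pow, Real.log_pow]
    have hlf := log_factorial_ge M hM1
    -- bracket bound
    have hbr : 1 + Real.log Nb + Real.log p - Real.log M ≤ D := by
      have hNpM : (0:ℝ) < Nb*p/M := by positivity
      have hQ0 : (0:ℝ) < ((2*K+1)/(4*(K+1)^2))*((u:ℝ)/(αx*n)) := by positivity
      have hstep1 : Nb*p/(M:ℝ) ≤ Nb*p/(u*(r*ln)/2) := by
        apply div_le_div_of_nonneg_left (by positivity) (by positivity) hM
      have hstep2 : Nb*p/(u*(r*ln)/2) = (u:ℝ)*(2*K+1)*c/(r*n) := by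
        simp only [hNb, hpdef]
        field_simp
      have hstep3 : (u:ℝ)*(2*K+1)*c/(r*n) ≤ ((2*K+1)/(4*(K+1)^2))*((u:ℝ)/(αx*n)) := by
        rw [div_mul_div_comm, div_le_div_iff₀ (by positivity) (by positivity)]
        have hint := mul_le_mul_of_nonneg_left hcon
          (show (0:ℝ) ≤ (2*K+1)*u*n by positivity)
        nlinarith [hint]
      have hchain : Nb*p/(M:ℝ) ≤ ((2*K+1)/(4*(K+1)^2))*((u:ℝ)/(αx*n)) :=
        le_trans hstep1 (le_of_eq hstep2 |>.trans hstep3)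
      have hlog : Real.log (Nb*p/(M:ℝ)) ≤ Real.log (((2*K+1)/(4*(K+1)^2))*((u:ℝ)/(αx*n))) :=
        Real.log_le_log hNpM hchain
      have hexp1 : Real.log (Nb*p/(M:ℝ)) = Real.log Nb + Real.log p - Real.log M := by
        rw [Real.log_div (by positivity) hM0.ne', Real.log_mul hNb0.ne' hp0.ne']
      have hexp2 : Real.log (((2*K+1)/(4*(K+1)^2))*((u:ℝ)/(αx*n)))
          = -Real.log (4*(K+1)^2/(2*K+1)) + (Real.log u - Real.log αx - ln) := by
        rw [Real.log_mul (by positivity) (by positivity),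
            Real.log_div h2K1.ne' (by positivity),
            Real.log_div hu0.ne' (by positivity),
            Real.log_div (by positivity) h2K1.ne',
            Real.log_mul hα.ne' hn0.ne']
        simp only [hlndef]
        ring
      rw [hexp1, hexp2] at hlog
      simp only [hD, hX]
      linarith
    have hD0 : D ≤ 0 := by
      have hl4 : Real.log 4 ≤ Real.log (4*(K+1)^2/(2*K+1)) := by
        apply Real.log_le_log (by norm_num)
        rw [le_div_iff₀ h2K1]
        nlinarith [sq_nonneg K]
      have hlog4 : (1.38:ℝ) < Real.log 4 := by
        have h2 := Real.log_two_gt_d9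
        have : Real.log 4 = 2*Real.log 2 := by
          rw [show (4:ℝ) = 2^2 by norm_num, Real.log_pow]; push_cast; ring
        linarith
      simp only [hD]
      linarith
    have hMDbound : (M:ℝ)*(1 + Real.log Nb + Real.log p - Real.log M) ≤ (M:ℝ)*D :=
      mul_le_mul_of_nonneg_left hbr hM0.le
    have hMD : (M:ℝ)*D ≤ (u*(r*ln)/2)*D := by
      rcases le_or_gt D 0 with h | h
      · exact mul_le_mul_of_nonpos_right hM h
      · linarith
    clear_value D Nb p m₀ X ln
    linarith [hlf, hMDbound, hMD]
  -- combine
  have hprod : (n:ℝ)^u/(u.factorial) * ((n:ℝ)^s/(s.factorial)) * (Nb^M/(M.factorial)) * (c*ln/(n:ℝ))^M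
      ≤ Real.exp (u*(1+X)) * Real.exp (K*u*(1+m₀+X))
        * Real.exp ((u*(r*ln)/2) * (1 - Real.log (4*(K+1)^2/(2*K+1)) + (-Real.log αx) - X)) := by
    have h12 : (n:ℝ)^u/(u.factorial) * ((n:ℝ)^s/(s.factorial))
        ≤ Real.exp (u*(1+X)) * Real.exp (K*u*(1+m₀+X)) :=
      mul_le_mul hf1 hf2 (by positivity) (Real.exp_nonneg _)
    calc (n:ℝ)^u/(u.factorial) * ((n:ℝ)^s/(s.factorial)) * (Nb^M/(M.factorial)) * (c*ln/(n:ℝ))^M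
        = ((n:ℝ)^u/(u.factorial) * ((n:ℝ)^s/(s.factorial))) * (Nb^M/(M.factorial) * (c*ln/(n:ℝ))^M) := by ring
      _ ≤ (Real.exp (u*(1+X)) * Real.exp (K*u*(1+m₀+X)))
          * Real.exp ((u*(r*ln)/2) * (1 - Real.log (4*(K+1)^2/(2*K+1)) + (-Real.log αx) - X)) := by
          apply mul_le_mul h12 hf34 (by positivity) (by positivity)
      _ = _ := by ring
  have hkey := keyineq c r K αx ln X hc hr hK hα hln hcon hG hn1 hn2 hn3 hX0 hXL
  have hfinal : u*(1+X) + K*u*(1+m₀+X)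
      + (u*(r*ln)/2) * (1 - Real.log (4*(K+1)^2/(2*K+1)) + (-Real.log αx) - X)
      ≤ -(r*(Real.log 4 - 1)/8) * u * ln := by
    have h1 : (u:ℝ)*((1+X) + K*(1 + m₀ + X) + (r*ln/2)*(1 - Real.log (4*(K+1)^2/(2*K+1)) + (-Real.log αx) - X))
        ≤ (u:ℝ)*(-(r*(Real.log 4 - 1)/8) * ln) :=
      mul_le_mul_of_nonneg_left hkey hu0.le
    calc u*(1+X) + K*u*(1+m₀+X)
        + (u*(r*ln)/2) * (1 - Real.log (4*(K+1)^2/(2*K+1)) + (-Real.log αx) - X)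
        = (u:ℝ)*((1+X) + K*(1 + m₀ + X) + (r*ln/2)*(1 - Real.log (4*(K+1)^2/(2*K+1)) + (-Real.log αx) - X)) := by ring
      _ ≤ (u:ℝ)*(-(r*(Real.log 4 - 1)/8) * ln) := h1
      _ = -(r*(Real.log 4 - 1)/8) * u * ln := by ring
  calc (n:ℝ)^u/(u.factorial) * ((n:ℝ)^s/(s.factorial)) * (Nb^M/(M.factorial)) * (c*ln/(n:ℝ))^M
      ≤ Real.exp (u*(1+X)) * Real.exp (K*u*(1+m₀+X))
        * Real.exp ((u*(r*ln)/2) * (1 - Real.log (4*(K+1)^2/(2*K+1)) + (-Real.log αx) - X)) := hprod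
    _ = Real.exp (u*(1+X) + K*u*(1+m₀+X)
        + (u*(r*ln)/2) * (1 - Real.log (4*(K+1)^2/(2*K+1)) + (-Real.log αx) - X)) := by
        rw [← Real.exp_add, ← Real.exp_add]
    _ ≤ Real.exp (-(r*(Real.log 4 - 1)/8) * u * ln) := Real.exp_le_exp.2 hfinal

open Finset in
lemma bad_subset (n : ℕ) (αx K r : ℝ) :
    {ω : Sym2 (Fin n) → Bool | ¬ ∀ G' : SimpleGraph (Fin n), G' ≤ graphOf ω →
        (∀ v : Fin n, r * Real.log n ≤ ((G'.neighborSet v).ncard : ℝ)) →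
        IsExpander G' (αx * n) K}
    ⊆ ⋃ u ∈ (Finset.Icc 1 n).filter (fun u : ℕ => (u:ℝ) ≤ αx * n),
      ⋃ U ∈ Finset.powersetCard u (Finset.univ : Finset (Fin n)),
      ⋃ S ∈ Finset.powersetCard (min (Nat.floor (K*u)) (n - u)) (Finset.univ \ U),
        {ω | Nat.ceil ((u:ℝ) * (r*Real.log n)/2) ≤ ((graphOf ω).edgeFinset ∩ pairsF U S).card} := by
  classical
  intro ω hω
  simp only [Set.mem_setOf_eq, not_forall] at hω
  obtain ⟨G', hle, hdeg, hnotexp⟩ := hω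
  unfold IsExpander at hnotexp
  push_neg at hnotexp
  obtain ⟨U₀, hU₀card, hviol⟩ := hnotexp
  set u := U₀.ncard with hu
  have hKu0 : (0:ℝ) < K * u := lt_of_le_of_lt (Nat.cast_nonneg _) hviol
  have hu1 : 1 ≤ u := by
    rcases Nat.eq_zero_or_pos u with h0 | h
    · rw [h0] at hKu0; simp at hKu0
    · exact h
  set U : Finset (Fin n) := U₀.toFinset with hU
  have hUcard : U.card = u := by
    rw [hU, hu, Set.ncard_eq_toFinset_card']
  have hun : u ≤ n := by
    rw [← hUcard]
    calc U.card ≤ (Finset.univ : Finset (Fin n)).card := Finset.card_le_univ U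
      _ = n := by simp
  set S₀ : Finset (Fin n) := (outerNbhd G' U₀).toFinset with hS₀
  have hS₀card : (S₀.card : ℝ) < K * u := by
    rw [hS₀, ← Set.ncard_eq_toFinset_card']
    exact hviol
  have hS₀sub : S₀ ⊆ Finset.univ \ U := by
    intro v hv
    rw [hS₀, Set.mem_toFinset] at hv
    rw [Finset.mem_sdiff]
    refine ⟨Finset.mem_univ _, ?_⟩
    rw [hU, Set.mem_toFinset]
    exact hv.1
  have hcardsdiff : (Finset.univ \ U).card = n - u := by
    rw [Finset.card_sdiff_of_subset (Finset.subset_univ U), hUcard]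
    simp
  have hS₀le : S₀.card ≤ min (Nat.floor (K*(u:ℝ))) (n - u) := by
    apply le_min
    · exact Nat.le_floor (le_of_lt hS₀card)
    · rw [← hcardsdiff]; exact Finset.card_le_card hS₀sub
  obtain ⟨S, hS₀S, hSsub, hScard⟩ := Finset.exists_subsuperset_card_eq hS₀sub hS₀le
    (by rw [hcardsdiff]; exact min_le_right _ _)
  have hnbr : ∀ v ∈ U, ∀ w : Fin n, G'.Adj v w → w ∈ U ∪ S := by
    intro v hv w hadj
    by_cases hw : w ∈ U₀
    · exact Finset.mem_union_left _ (by rw [hU, Set.mem_toFinset]; exact hw)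
    · apply Finset.mem_union_right
      apply hS₀S
      rw [hS₀, Set.mem_toFinset]
      exact ⟨hw, v, by rwa [hU, Set.mem_toFinset] at hv, hadj⟩
  have hdegU : ∀ v ∈ U, r * Real.log n ≤ ((G'.neighborSet v).ncard : ℝ) :=
    fun v _ => hdeg v
  have hdc := double_count ω G' hle (r * Real.log n) U S hdegU hnbr
  rw [hUcard] at hdc
  have hceil : Nat.ceil ((u:ℝ) * (r*Real.log n)/2)
      ≤ ((graphOf ω).edgeFinset ∩ pairsF U S).card := by
    apply Nat.ceil_le.2
    linarith
  refine Set.mem_iUnion₂.2 ⟨u, ?_, Set.mem_iUnion₂.2 ⟨U, ?_, Set.mem_iUnion₂.2 ⟨S, ?_, hceil⟩⟩⟩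
  · rw [Finset.mem_filter, Finset.mem_Icc]
    exact ⟨⟨hu1, hun⟩, hU₀card⟩
  · exact Finset.mem_powersetCard.2 ⟨Finset.subset_univ _, hUcard⟩
  · exact Finset.mem_powersetCard.2 ⟨hSsub, hScard⟩

open Finset in
lemma prob_bad_le (n : ℕ) (c r K αx : ℝ)
    (hc : 0 < c) (hr : 0 < r) (hK : 0 < K) (hα : 0 < αx)
    (hcon : 4*c*αx*(K+1)^2 ≤ r)
    (hln : 1 ≤ Real.log n)
    (hG : 107/c + 1 ≤ αx*K*Real.log n)
    (hn1 : 3 + 2*Real.log (Real.log n) ≤ 0.14*(r*Real.log n))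
    (hn2 : 2*Real.sqrt (Real.log n)*Real.log (Real.log n) ≤ 0.018*(r*Real.log n))
    (hn3 : 4 ≤ r*Real.log n)
    (hp1 : c*Real.log n/(n:ℝ) ≤ 1)
    (hy : Real.exp (-(r*(Real.log 4 - 1)/8) * Real.log n) ≤ 1/2) :
    gnp n (c*Real.log n/(n:ℝ)) {ω | ¬ ∀ G' : SimpleGraph (Fin n), G' ≤ graphOf ω →
        (∀ v : Fin n, r * Real.log n ≤ ((G'.neighborSet v).ncard : ℝ)) →
        IsExpander G' (αx * n) K}
    ≤ ENNReal.ofReal (2 * Real.exp (-(r*(Real.log 4 - 1)/8) * Real.log n)) := by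
  have hn0 : 0 < n := by
    rcases Nat.eq_zero_or_pos n with h | h
    · subst h; simp only [Nat.cast_zero, Real.log_zero] at hln; linarith
    · exact h
  have hn0' : (0:ℝ) < n := by exact_mod_cast hn0
  have hln0 : (0:ℝ) < Real.log n := lt_of_lt_of_le one_pos hln
  set p := c*Real.log n/(n:ℝ) with hp
  have hp0 : 0 ≤ p := by positivity
  set y := Real.exp (-(r*(Real.log 4 - 1)/8) * Real.log n) with hydef
  have hy0 : 0 ≤ y := Real.exp_nonneg _
  set su : ℕ → ℕ := fun u => min (Nat.floor (K*(u:ℝ))) (n - u) with hsu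
  set Mu : ℕ → ℕ := fun u => Nat.ceil ((u:ℝ) * (r*Real.log n)/2) with hMu
  set I := (Finset.Icc 1 n).filter (fun u : ℕ => (u:ℝ) ≤ αx * n) with hI
  set V : ℕ → ℝ := fun u =>
    ((u:ℝ)^2*(2*K+1)/2)^(Mu u)/((Mu u).factorial) * p^(Mu u) with hV
  -- per-(U,S) bound
  have hEV : ∀ u ∈ I, ∀ U ∈ Finset.powersetCard u (Finset.univ : Finset (Fin n)),
      ∀ S ∈ Finset.powersetCard (su u) (Finset.univ \ U),
      gnp n p {ω | Mu u ≤ ((graphOf ω).edgeFinset ∩ pairsF U S).card}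
        ≤ ENNReal.ofReal (V u) := by
    intro u hu U hU S hS
    obtain ⟨hUsub, hUcard⟩ := Finset.mem_powersetCard.1 hU
    obtain ⟨hSsub, hScard⟩ := Finset.mem_powersetCard.1 hS
    have hu0 : (0:ℝ) ≤ u := Nat.cast_nonneg u
    have husK : ((su u : ℕ):ℝ) ≤ K*u := by
      calc ((su u : ℕ):ℝ) ≤ ((Nat.floor (K*(u:ℝ)) : ℕ) : ℝ) := by
            exact_mod_cast min_le_left _ _
        _ ≤ K*u := Nat.floor_le (by positivity)
    have hFcard : ((pairsF U S).card : ℝ) ≤ (u:ℝ)^2*(2*K+1)/2 := by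
      have h1 := pairsF_card U S
      rw [hUcard, hScard] at h1
      have h2 : 2 * (pairsF U S).card ≤ u*u + 2*(u * su u) := by omega
      have h3 : 2 * ((pairsF U S).card:ℝ) ≤ (u:ℝ)*u + 2*((u:ℝ) * (su u : ℕ)) := by
        exact_mod_cast h2
      have h4 : (u:ℝ) * (su u : ℕ) ≤ (u:ℝ)*(K*u) := mul_le_mul_of_nonneg_left husK hu0
      nlinarith
    have hchoose : (((pairsF U S).card.choose (Mu u)) : ℝ)
        ≤ ((u:ℝ)^2*(2*K+1)/2)^(Mu u)/((Mu u).factorial) := by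
      calc (((pairsF U S).card.choose (Mu u)) : ℝ)
          ≤ ((pairsF U S).card : ℝ)^(Mu u)/((Mu u).factorial) :=
            Nat.choose_le_pow_div (Mu u) _
        _ ≤ ((u:ℝ)^2*(2*K+1)/2)^(Mu u)/((Mu u).factorial) := by
            gcongr <;> first
              | exact Nat.cast_nonneg _
              | exact hFcard
    calc gnp n p {ω | Mu u ≤ ((graphOf ω).edgeFinset ∩ pairsF U S).card}
        ≤ (((pairsF U S).card.choose (Mu u)) : ENNReal) * ENNReal.ofReal p ^ (Mu u) :=
          prob_dense p hp1 _ _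
      _ = ENNReal.ofReal ((((pairsF U S).card.choose (Mu u)) : ℝ) * p^(Mu u)) := by
          rw [ENNReal.ofReal_mul (Nat.cast_nonneg _), ENNReal.ofReal_natCast,
            ENNReal.ofReal_pow hp0]
      _ ≤ ENNReal.ofReal (V u) := by
          apply ENNReal.ofReal_le_ofReal
          simp only [hV]
          exact mul_le_mul_of_nonneg_right hchoose (pow_nonneg hp0 _)
  -- union bound
  have hmain : gnp n p {ω | ¬ ∀ G' : SimpleGraph (Fin n), G' ≤ graphOf ω →
        (∀ v : Fin n, r * Real.log n ≤ ((G'.neighborSet v).ncard : ℝ)) →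
        IsExpander G' (αx * n) K}
      ≤ ∑ u ∈ I, (n.choose u : ENNReal) * ((n-u).choose (su u) : ENNReal)
          * ENNReal.ofReal (V u) := by
    calc gnp n p _ ≤ gnp n p (⋃ u ∈ I,
          ⋃ U ∈ Finset.powersetCard u (Finset.univ : Finset (Fin n)),
          ⋃ S ∈ Finset.powersetCard (su u) (Finset.univ \ U),
            {ω | Mu u ≤ ((graphOf ω).edgeFinset ∩ pairsF U S).card}) :=
          measure_mono (bad_subset n αx K r)
      _ ≤ ∑ u ∈ I, gnp n p (⋃ U ∈ Finset.powersetCard u (Finset.univ : Finset (Fin n)),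
          ⋃ S ∈ Finset.powersetCard (su u) (Finset.univ \ U),
            {ω | Mu u ≤ ((graphOf ω).edgeFinset ∩ pairsF U S).card}) :=
          measure_biUnion_finset_le _ _
      _ ≤ ∑ u ∈ I, (n.choose u : ENNReal) * ((n-u).choose (su u) : ENNReal)
          * ENNReal.ofReal (V u) := by
          apply Finset.sum_le_sum
          intro u hu
          calc gnp n p _
              ≤ ∑ U ∈ Finset.powersetCard u (Finset.univ : Finset (Fin n)),
                gnp n p (⋃ S ∈ Finset.powersetCard (su u) (Finset.univ \ U),
                  {ω | Mu u ≤ ((graphOf ω).edgeFinset ∩ pairsF U S).card}) :=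
                measure_biUnion_finset_le _ _
            _ ≤ ∑ U ∈ Finset.powersetCard u (Finset.univ : Finset (Fin n)),
                ∑ S ∈ Finset.powersetCard (su u) (Finset.univ \ U),
                  gnp n p {ω | Mu u ≤ ((graphOf ω).edgeFinset ∩ pairsF U S).card} :=
                Finset.sum_le_sum (fun U _ => measure_biUnion_finset_le _ _)
            _ ≤ ∑ U ∈ Finset.powersetCard u (Finset.univ : Finset (Fin n)),
                ∑ S ∈ Finset.powersetCard (su u) (Finset.univ \ U),
                  ENNReal.ofReal (V u) := by
                apply Finset.sum_le_sum
                intro U hU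
                apply Finset.sum_le_sum
                intro S hS
                exact hEV u hu U hU S hS
            _ = (n.choose u : ENNReal) * ((n-u).choose (su u) : ENNReal)
                  * ENNReal.ofReal (V u) := by
                have hcard : ∀ U ∈ Finset.powersetCard u (Finset.univ : Finset (Fin n)),
                    (Finset.powersetCard (su u) (Finset.univ \ U)).card
                      = (n-u).choose (su u) := by
                  intro U hU
                  obtain ⟨_, hUcard⟩ := Finset.mem_powersetCard.1 hU
                  rw [Finset.card_powersetCard, Finset.card_sdiff_of_subset (Finset.subset_univ U),
                    hUcard]
                  congr 2
                  simp
                rw [Finset.sum_congr rfl (fun U hU => by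
                  rw [Finset.sum_const, hcard U hU, nsmul_eq_mul])]
                rw [Finset.sum_const, Finset.card_powersetCard, nsmul_eq_mul]
                rw [Finset.card_univ, Fintype.card_fin]
                ring
  -- per-u real bound via core
  have hperu : ∀ u ∈ I, (n.choose u : ENNReal) * ((n-u).choose (su u) : ENNReal)
      * ENNReal.ofReal (V u) ≤ ENNReal.ofReal (y^u) := by
    intro u hu
    obtain ⟨huIcc, huA⟩ := Finset.mem_filter.1 hu
    obtain ⟨hu1, hun⟩ := Finset.mem_Icc.1 huIcc
    have hsn : su u ≤ n := le_trans (min_le_right _ _) (Nat.sub_le _ _)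
    have husK : ((su u : ℕ):ℝ) ≤ K*u := by
      calc ((su u : ℕ):ℝ) ≤ ((Nat.floor (K*(u:ℝ)) : ℕ) : ℝ) := by
            exact_mod_cast min_le_left _ _
        _ ≤ K*u := Nat.floor_le (by positivity)
    have hMle : (u:ℝ) * (r*Real.log n)/2 ≤ (Mu u : ℝ) := Nat.le_ceil _
    have hcore := core c r K αx n u (su u) (Mu u) hc hr hK hα hcon hln hG hn1 hn2 hn3
      hu1 huA hun husK hsn hMle
    have hchoose1 : ((n.choose u) : ℝ) ≤ (n:ℝ)^u/(u.factorial) :=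
      Nat.choose_le_pow_div u n
    have hchoose2 : (((n-u).choose (su u)) : ℝ) ≤ (n:ℝ)^(su u)/((su u).factorial) := by
      calc (((n-u).choose (su u)) : ℝ) ≤ ((n-u : ℕ):ℝ)^(su u)/((su u).factorial) :=
            Nat.choose_le_pow_div (su u) _
        _ ≤ (n:ℝ)^(su u)/((su u).factorial) := by
            gcongr <;> first
              | exact Nat.cast_nonneg _
              | exact_mod_cast Nat.sub_le n u
    have hreal : ((n.choose u) : ℝ) * (((n-u).choose (su u)) : ℝ) * V u ≤ y^u := by
      have hV0' : 0 ≤ V u := by simp only [hV]; positivity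
      have h1 : ((n.choose u) : ℝ) * (((n-u).choose (su u)) : ℝ) * V u
          ≤ ((n:ℝ)^u/(u.factorial)) * ((n:ℝ)^(su u)/((su u).factorial)) * V u := by
        apply mul_le_mul_of_nonneg_right _ hV0'
        apply mul_le_mul hchoose1 hchoose2 (Nat.cast_nonneg _) (by positivity)
      have h2 : ((n:ℝ)^u/(u.factorial)) * ((n:ℝ)^(su u)/((su u).factorial)) * V u
          ≤ Real.exp (-(r*(Real.log 4 - 1)/8) * u * Real.log n) := by
        calc ((n:ℝ)^u/(u.factorial)) * ((n:ℝ)^(su u)/((su u).factorial)) * V u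
            = (n:ℝ)^u/(u.factorial) * ((n:ℝ)^(su u)/((su u).factorial))
              * (((u:ℝ)^2*(2*K+1)/2)^(Mu u)/((Mu u).factorial)) * p^(Mu u) := by
              simp only [hV]; ring
          _ ≤ _ := hcore
      have h3 : Real.exp (-(r*(Real.log 4 - 1)/8) * u * Real.log n) = y^u := by
        rw [hydef, ← Real.exp_nat_mul]
        congr 1
        ring
      linarith
    calc (n.choose u : ENNReal) * ((n-u).choose (su u) : ENNReal) * ENNReal.ofReal (V u)
        = ENNReal.ofReal (((n.choose u) : ℝ) * (((n-u).choose (su u)) : ℝ) * V u) := by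
          rw [← ENNReal.ofReal_natCast (n.choose u), ← ENNReal.ofReal_natCast ((n-u).choose (su u)),
            ← ENNReal.ofReal_mul (Nat.cast_nonneg _),
            ← ENNReal.ofReal_mul (mul_nonneg (Nat.cast_nonneg _) (Nat.cast_nonneg _))]
      _ ≤ ENNReal.ofReal (y^u) := ENNReal.ofReal_le_ofReal hreal
  -- geometric sum
  have hgeom : ∑ u ∈ I, ENNReal.ofReal (y^u) ≤ ENNReal.ofReal (2*y) := by
    calc ∑ u ∈ I, ENNReal.ofReal (y^u)
        ≤ ∑ u ∈ Finset.Icc 1 n, ENNReal.ofReal (y^u) :=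
          Finset.sum_le_sum_of_subset (Finset.filter_subset _ _)
      _ = ENNReal.ofReal (∑ u ∈ Finset.Icc 1 n, y^u) :=
          (ENNReal.ofReal_sum_of_nonneg (fun u _ => pow_nonneg hy0 u)).symm
      _ ≤ ENNReal.ofReal (2*y) := by
          apply ENNReal.ofReal_le_ofReal
          have hs1 : ∑ u ∈ Finset.Icc 1 n, y^u = ∑ i ∈ Finset.range n, y^(1+i) := by
            rw [← Finset.Ico_add_one_right_eq_Icc, Finset.sum_Ico_eq_sum_range]
            simp
          have hs2 : ∑ i ∈ Finset.range n, y^(1+i) ≤ ∑ i ∈ Finset.range n, y*(1/2)^i := by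
            apply Finset.sum_le_sum
            intro i _
            rw [pow_add, pow_one]
            exact mul_le_mul_of_nonneg_left (pow_le_pow_left₀ hy0 hy i) hy0
          have hs3 : ∑ i ∈ Finset.range n, y*(1/2:ℝ)^i = y * ∑ i ∈ Finset.range n, (1/2:ℝ)^i := by
            rw [Finset.mul_sum]
          have hs4 : y * ∑ i ∈ Finset.range n, (1/2:ℝ)^i ≤ y * 2 :=
            mul_le_mul_of_nonneg_left (sum_geometric_two_le n) hy0
          linarith
  calc gnp n p _ ≤ ∑ u ∈ I, (n.choose u : ENNReal) * ((n-u).choose (su u) : ENNReal)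
        * ENNReal.ofReal (V u) := hmain
    _ ≤ ∑ u ∈ I, ENNReal.ofReal (y^u) := Finset.sum_le_sum hperu
    _ ≤ ENNReal.ofReal (2*y) := hgeom

/-- Lemma 5.2: a.a.s. every spanning subgraph of `G(n, c log n/n)`
with minimum degree at least `r log n` (where `r ≥ 4cα(k+1)²`) is an `(αn, k)`-expander. -/
theorem stmt_12 (c : ℝ) (hc : 0 < c) (p : ℕ → ℝ)
    (hp : ∀ n : ℕ, p n = c * Real.log n / n)
    (α k : ℕ → ℝ)
    (hαk : Tendsto (fun n : ℕ => α n * k n * Real.log n) atTop atTop)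
    (r : ℝ) (hr : 0 < r) (hr' : ∀ n : ℕ, 4 * c * α n * (k n + 1) ^ 2 ≤ r) :
    Tendsto
      (fun n : ℕ => gnp n (p n)
        {ω | ∀ G' : SimpleGraph (Fin n), G' ≤ graphOf ω →
            (∀ v : Fin n, r * Real.log n ≤ ((G'.neighborSet v).ncard : ℝ)) →
            IsExpander G' (α n * n) (k n)})
      atTop (nhds 1) := by
  have hl2a : (0.6931:ℝ) < Real.log 2 := by linarith [Real.log_two_gt_d9]
  have hlog4 : Real.log 4 = 2 * Real.log 2 := by
    rw [show (4:ℝ) = 2^2 by norm_num, Real.log_pow]; push_cast; ring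
  have hβ : (0:ℝ) < r*(Real.log 4 - 1)/8 := by
    have h1 : (1.38:ℝ) < Real.log 4 := by linarith
    have h2 : (0:ℝ) < Real.log 4 - 1 := by linarith
    exact div_pos (mul_pos hr h2) (by norm_num)
  have hlogtop : Tendsto (fun n : ℕ => Real.log n) atTop atTop :=
    Real.tendsto_log_atTop.comp tendsto_natCast_atTop_atTop
  -- eventual conditions
  have e1 : ∀ᶠ n : ℕ in atTop, 1 ≤ Real.log n := hlogtop.eventually_ge_atTop 1
  have e2 : ∀ᶠ n : ℕ in atTop, 107/c + 1 ≤ α n * k n * Real.log n :=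
    hαk.eventually_ge_atTop _
  have e5 : ∀ᶠ n : ℕ in atTop, 4 ≤ r * Real.log n :=
    (hlogtop.const_mul_atTop hr).eventually_ge_atTop 4
  have e3 : ∀ᶠ n : ℕ in atTop, 3 + 2*Real.log (Real.log n) ≤ 0.14*(r*Real.log n) := by
    have hx : ∀ᶠ x : ℝ in atTop, 3 + 2*Real.log x ≤ 0.14*(r*x) := by
      have h1 : ∀ᶠ x : ℝ in atTop, |Real.log x| ≤ (0.14*r/4) * |x| := by
        have := Real.isLittleO_log_id_atTop.def (show (0:ℝ) < 0.14*r/4 by positivity)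
        simpa using this
      have h2 : ∀ᶠ x : ℝ in atTop, 3 ≤ (0.14*r/2)*x :=
        (tendsto_id.const_mul_atTop (show (0:ℝ) < 0.14*r/2 by positivity)).eventually_ge_atTop 3
      have h3 : ∀ᶠ x : ℝ in atTop, (0:ℝ) ≤ x := eventually_ge_atTop 0
      filter_upwards [h1, h2, h3] with x h1 h2 h3
      have habs : Real.log x ≤ (0.14*r/4)*x := by
        calc Real.log x ≤ |Real.log x| := le_abs_self _
          _ ≤ (0.14*r/4)*|x| := h1
          _ = (0.14*r/4)*x := by rw [abs_of_nonneg h3]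
      linarith
    exact hlogtop.eventually hx
  have e4 : ∀ᶠ n : ℕ in atTop,
      2*Real.sqrt (Real.log n)*Real.log (Real.log n) ≤ 0.018*(r*Real.log n) := by
    have hx : ∀ᶠ x : ℝ in atTop, 2*Real.sqrt x*Real.log x ≤ 0.018*(r*x) := by
      have h1 : ∀ᶠ x : ℝ in atTop, |Real.log x| ≤ (0.009*r) * |x ^ (1/2:ℝ)| := by
        have := (isLittleO_log_rpow_atTop (show (0:ℝ) < 1/2 by norm_num)).def
          (show (0:ℝ) < 0.009*r by positivity)
        simpa using this
      have h3 : ∀ᶠ x : ℝ in atTop, (0:ℝ) ≤ x := eventually_ge_atTop 0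
      filter_upwards [h1, h3] with x h1 h3
      have hsq : x ^ (1/2:ℝ) = Real.sqrt x := (Real.sqrt_eq_rpow x).symm
      have habs : Real.log x ≤ (0.009*r)*Real.sqrt x := by
        calc Real.log x ≤ |Real.log x| := le_abs_self _
          _ ≤ (0.009*r)*|x ^ (1/2:ℝ)| := h1
          _ = (0.009*r)*Real.sqrt x := by
              rw [hsq, abs_of_nonneg (Real.sqrt_nonneg x)]
      have hs0 : 0 ≤ Real.sqrt x := Real.sqrt_nonneg x
      have h4 : 2*Real.sqrt x*Real.log x ≤ 2*Real.sqrt x*((0.009*r)*Real.sqrt x) := by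
        apply mul_le_mul_of_nonneg_left habs (by positivity)
      have h5 : 2*Real.sqrt x*((0.009*r)*Real.sqrt x) = 0.018*(r*(Real.sqrt x*Real.sqrt x)) := by
        ring
      rw [Real.mul_self_sqrt h3] at h5
      linarith
    exact hlogtop.eventually hx
  have e6 : ∀ᶠ n : ℕ in atTop, c*Real.log n/(n:ℝ) ≤ 1 := by
    have hx : ∀ᶠ x : ℝ in atTop, c*Real.log x/x ≤ 1 := by
      have h1 : ∀ᶠ x : ℝ in atTop, |Real.log x| ≤ (1/c) * |x| := by
        have := Real.isLittleO_log_id_atTop.def (show (0:ℝ) < 1/c by positivity)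
        simpa using this
      have h3 : ∀ᶠ x : ℝ in atTop, (0:ℝ) < x := eventually_gt_atTop 0
      filter_upwards [h1, h3] with x h1 h3
      have habs : Real.log x ≤ (1/c)*x := by
        calc Real.log x ≤ |Real.log x| := le_abs_self _
          _ ≤ (1/c)*|x| := h1
          _ = (1/c)*x := by rw [abs_of_nonneg h3.le]
      rw [div_le_one h3]
      calc c*Real.log x ≤ c*((1/c)*x) := mul_le_mul_of_nonneg_left habs hc.le
        _ = x := by field_simp
    exact tendsto_natCast_atTop_atTop.eventually hx
  have e7 : ∀ᶠ n : ℕ in atTop, Real.exp (-(r*(Real.log 4 - 1)/8) * Real.log n) ≤ 1/2 := by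
    have hbot : Tendsto (fun n : ℕ => -(r*(Real.log 4 - 1)/8) * Real.log n) atTop atBot := by
      have h1 : Tendsto (fun n : ℕ => (r*(Real.log 4 - 1)/8) * Real.log n) atTop atTop :=
        hlogtop.const_mul_atTop hβ
      have h2 := tendsto_neg_atTop_atBot.comp h1
      refine h2.congr (fun n => by simp only [Function.comp_apply]; ring)
    have h3 := (Real.tendsto_exp_atBot.comp hbot).eventually_le_const
      (show (0:ℝ) < 1/2 by norm_num)
    exact h3
  -- closing
  set B : ℕ → ENNReal := fun n => gnp n (p n)
    {ω | ¬ ∀ G' : SimpleGraph (Fin n), G' ≤ graphOf ω →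
        (∀ v : Fin n, r * Real.log n ≤ ((G'.neighborSet v).ncard : ℝ)) →
        IsExpander G' (α n * n) (k n)} with hB
  have hbot : Tendsto (fun n : ℕ => -(r*(Real.log 4 - 1)/8) * Real.log n) atTop atBot := by
    have h1 : Tendsto (fun n : ℕ => (r*(Real.log 4 - 1)/8) * Real.log n) atTop atTop :=
      hlogtop.const_mul_atTop hβ
    have h2 := tendsto_neg_atTop_atBot.comp h1
    refine h2.congr (fun n => by simp only [Function.comp_apply]; ring)
  have herr0 : Tendsto (fun n : ℕ => ENNReal.ofReal
      (2 * Real.exp (-(r*(Real.log 4 - 1)/8) * Real.log n))) atTop (nhds 0) := by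
    have h1 : Tendsto (fun n : ℕ => 2 * Real.exp (-(r*(Real.log 4 - 1)/8) * Real.log n))
        atTop (nhds 0) := by
      have h2 := Real.tendsto_exp_atBot.comp hbot
      have h3 := h2.const_mul (2:ℝ)
      simpa using h3
    have h4 := ENNReal.tendsto_ofReal h1
    simpa using h4
  have hbad : ∀ᶠ n : ℕ in atTop, B n ≤ ENNReal.ofReal
      (2 * Real.exp (-(r*(Real.log 4 - 1)/8) * Real.log n)) := by
    filter_upwards [e1, e2, e3, e4, e5, e6, e7] with n h1 h2 h3 h4 h5 h6 h7
    rcases le_or_gt (k n) 0 with hk | hk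
    · have hempty : {ω : Sym2 (Fin n) → Bool | ¬ ∀ G' : SimpleGraph (Fin n), G' ≤ graphOf ω →
          (∀ v : Fin n, r * Real.log n ≤ ((G'.neighborSet v).ncard : ℝ)) →
          IsExpander G' (α n * n) (k n)} = ∅ := by
        apply Set.eq_empty_iff_forall_notMem.2
        intro ω hω
        apply hω
        intro G' _ _ U _
        calc k n * U.ncard ≤ 0 := mul_nonpos_of_nonpos_of_nonneg hk (Nat.cast_nonneg _)
          _ ≤ ((outerNbhd G' U).ncard : ℝ) := Nat.cast_nonneg _
      rw [hB]
      simp only [hempty, measure_empty]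
      exact zero_le
    · have hαpos : 0 < α n := by
        by_contra hcon
        push_neg at hcon
        have hlog0 : (0:ℝ) < Real.log n := by linarith
        have : α n * k n * Real.log n ≤ 0 := by
          apply mul_nonpos_of_nonpos_of_nonneg _ hlog0.le
          exact mul_nonpos_of_nonpos_of_nonneg hcon hk.le
        have h107 : (0:ℝ) < 107/c := div_pos (by norm_num) hc
        linarith
      rw [hB]
      simp only [hp n]
      exact prob_bad_le n c r (k n) (α n) hc hr hk hαpos (hr' n) h1 h2 h3 h4 h5 h6 h7
  have hBtend : Tendsto B atTop (nhds 0) := by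
    apply tendsto_of_tendsto_of_tendsto_of_le_of_le' tendsto_const_nhds herr0
    · exact Filter.Eventually.of_forall (fun n => zero_le)
    · exact hbad
  have hcompl : ∀ n : ℕ, gnp n (p n)
      {ω | ∀ G' : SimpleGraph (Fin n), G' ≤ graphOf ω →
          (∀ v : Fin n, r * Real.log n ≤ ((G'.neighborSet v).ncard : ℝ)) →
          IsExpander G' (α n * n) (k n)} = 1 - B n := by
    intro n
    have hms := measurableSet_all (n := n)
      {ω | ∀ G' : SimpleGraph (Fin n), G' ≤ graphOf ω →
          (∀ v : Fin n, r * Real.log n ≤ ((G'.neighborSet v).ncard : ℝ)) →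
          IsExpander G' (α n * n) (k n)}
    have h1 := prob_compl_eq_one_sub (μ := gnp n (p n)) hms
    rw [Set.compl_setOf] at h1
    simp only [hB]
    rw [h1, ENNReal.sub_sub_cancel ENNReal.one_ne_top prob_le_one]
  have hfinal : Tendsto (fun n => 1 - B n) atTop (nhds 1) := by
    have h := ENNReal.Tendsto.sub (tendsto_const_nhds :
      Tendsto (fun _ : ℕ => (1:ENNReal)) atTop (nhds 1)) hBtend (Or.inl ENNReal.one_ne_top)
    simpa using h
  exact hfinal.congr (fun n => (hcompl n).symm)
end
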